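/- arXiv:2311.08242 — 12 statements merged into one kernel-verified Lean document; each statement's English description precedes it below -/
import Mathlib

section
/- In the basic potential-outcome setup with no confounding, assuming ℙ(E=1) > 0, ℙ(E=0) > 0, ℙ(R = 1 ∣ E = 1) > 0 and ℙ(R = 1 ∣ E = 0) > 0, the probability of causation satisfies the lower bound PC ≥ max(0, 1 − 1/RR), where RR = ℙ(R = 1 ∣ E = 1)/ℙ(R = 1 ∣ E = 0) is the risk ratio. -/
/-!
Independence of `E` and `(R₀, R₁)` means that conditioning on an exposure event leaves the law of
`(R₀, R₁)` unchanged, so `p₁ = ℙ(R₁ = 1)`, `p₀ = ℙ(R₀ = 1)` and `PC = ℙ(R₀ = 0 ∣ R₁ = 1)`.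
The Fréchet bound `ℙ(R₁ = 1, R₀ = 0) ≥ ℙ(R₁ = 1) - ℙ(R₀ = 1)` then gives `PC ≥ 1 - p₀ / p₁`.
-/

open MeasureTheory ProbabilityTheory

namespace ProbabilityTheory

variable {Ω α β : Type*} {mΩ : MeasurableSpace Ω} {mα : MeasurableSpace α}
  {mβ : MeasurableSpace β} {μ : Measure Ω}

lemma cond_congr_of_inter_eq {s t t' : Set Ω} (hs : MeasurableSet s) (h : s ∩ t = s ∩ t') :
    μ[t|s] = μ[t'|s] := by
  rw [← cond_inter_self hs, h, cond_inter_self hs]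

lemma one_sub_div_le_cond_compl [IsFiniteMeasure μ] {s : Set Ω} (hs : MeasurableSet s)
    (hμs : μ s ≠ 0) (t : Set Ω) :
    1 - μ.real t / μ.real s ≤ (μ[|s]).real tᶜ := by
  have hpos : 0 < μ.real s := ENNReal.toReal_pos hμs (measure_ne_top _ _)
  have hcond : (μ[|s]).real tᶜ = μ.real (s \ t) / μ.real s := by
    rw [measureReal_def, cond_apply hs, ENNReal.toReal_mul, ENNReal.toReal_inv, inv_mul_eq_div]
    rfl
  rw [hcond, one_sub_div hpos.ne', div_le_div_iff_of_pos_right hpos]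
  exact le_measureReal_sdiff

variable [IsFiniteMeasure μ] {X : Ω → α} {Y : Ω → β} {A : Set α}

lemma IndepFun.cond_preimage (h : IndepFun X Y μ) (hX : Measurable X) (hA : MeasurableSet A)
    (hμA : μ (X ⁻¹' A) ≠ 0) {T : Set β} (hT : MeasurableSet T) :
    μ[Y ⁻¹' T | X ⁻¹' A] = μ (Y ⁻¹' T) := by
  rw [cond_apply (hX hA), h.measure_inter_preimage_eq_mul A T hA hT, ← mul_assoc,
    ENNReal.inv_mul_cancel hμA (measure_ne_top _ _), one_mul]

lemma IndepFun.cond_inter_preimage (h : IndepFun X Y μ) (hX : Measurable X) (hY : Measurable Y)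
    (hA : MeasurableSet A) (hμA : μ (X ⁻¹' A) ≠ 0) {S T : Set β} (hS : MeasurableSet S)
    (hT : MeasurableSet T) :
    μ[Y ⁻¹' T | X ⁻¹' A ∩ Y ⁻¹' S] = μ[Y ⁻¹' T | Y ⁻¹' S] := by
  rw [← cond_cond_eq_cond_inter (hX hA) (hY hS), cond_apply (hY hS), cond_apply (hY hS),
    ← Set.preimage_inter, h.cond_preimage hX hA hμA hS, h.cond_preimage hX hA hμA (hS.inter hT)]

end ProbabilityTheory

theorem pc_lower_bound_general
    {Ω : Type*} [MeasurableSpace Ω] (μ : Measure Ω) [IsProbabilityMeasure μ]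
    (E R₀ R₁ R : Ω → Bool)
    (hEmeas : Measurable E) (hR₀meas : Measurable R₀) (hR₁meas : Measurable R₁)
    (hR : R = fun ω => if E ω then R₁ ω else R₀ ω)
    (hindep : IndepFun E (fun ω => (R₀ ω, R₁ ω)) μ)
    (hpos1 : 0 < μ {ω | E ω = true}) (hpos0 : 0 < μ {ω | E ω = false})
    (p₁ p₀ : ℝ)
    (hp₁ : p₁ = (μ[|{ω | E ω = true}] {ω | R ω = true}).toReal)
    (hp₀ : p₀ = (μ[|{ω | E ω = false}] {ω | R ω = true}).toReal)
    (hp₁pos : 0 < p₁)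
    (RR : ℝ) (hRR : RR = p₁ / p₀)
    (PC : ℝ)
    (hPC : PC = (μ[|{ω | E ω = true ∧ R₁ ω = true}] {ω | R₀ ω = false}).toReal) :
    PC ≥ max 0 (1 - 1 / RR) := by
  have hG : Measurable fun ω => (R₀ ω, R₁ ω) := hR₀meas.prodMk hR₁meas
  have hE : ∀ b, MeasurableSet {ω | E ω = b} := fun b => hEmeas (measurableSet_singleton b)
  have hp₁' : p₁ = μ.real {ω | R₁ ω = true} := by
    rw [hp₁, cond_congr_of_inter_eq (hE true) (t' := {ω | R₁ ω = true})
      (by ext ω; simp +contextual [hR])]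
    exact congrArg ENNReal.toReal (hindep.cond_preimage hEmeas
      (measurableSet_singleton true) hpos1.ne' (T := {p | p.2}) .of_discrete)
  have hp₀' : p₀ = μ.real {ω | R₀ ω = true} := by
    rw [hp₀, cond_congr_of_inter_eq (hE false) (t' := {ω | R₀ ω = true})
      (by ext ω; simp +contextual [hR])]
    exact congrArg ENNReal.toReal (hindep.cond_preimage hEmeas
      (measurableSet_singleton false) hpos0.ne' (T := {p | p.1}) .of_discrete)
  have hPC' : PC = (μ[|{ω | R₁ ω = true}]).real {ω | R₀ ω = true}ᶜ := by
    rw [hPC, show {ω | R₀ ω = false} = {ω | R₀ ω = true}ᶜ by ext; simp]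
    exact congrArg ENNReal.toReal (hindep.cond_inter_preimage hEmeas hG
      (measurableSet_singleton true) hpos1.ne' (S := {p | p.2}) (T := {p | p.1}ᶜ)
      .of_discrete .of_discrete)
  have hμR₁ : μ {ω | R₁ ω = true} ≠ 0 := (measureReal_ne_zero_iff).mp (hp₁' ▸ hp₁pos.ne')
  rw [hRR, one_div_div, hp₁', hp₀', hPC']
  exact max_le measureReal_nonneg
    (one_sub_div_le_cond_compl (hR₁meas (measurableSet_singleton true)) hμR₁ _)

/-- **Lower bound on the probability of causation (basic setup, no confounding).**
In the basic potential-outcome setup (`E` the binary exposure, `R₀, R₁` the binary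
potential responses, observed response `R = R₁` on `{E = 1}` and `R = R₀` on `{E = 0}`,
and `E` independent of the pair `(R₀, R₁)`), assuming `ℙ(E=1) > 0`, `ℙ(E=0) > 0`,
`ℙ(R=1 ∣ E=1) > 0` and `ℙ(R=1 ∣ E=0) > 0`, the probability of causation
`PC = ℙ(R₀ = 0 ∣ E = 1, R₁ = 1)` satisfies `PC ≥ max 0 (1 - 1/RR)`, where
`RR = ℙ(R=1 ∣ E=1) / ℙ(R=1 ∣ E=0)` is the risk ratio. -/
theorem pc_lower_bound
    {Ω : Type*} [MeasurableSpace Ω] (μ : Measure Ω) [IsProbabilityMeasure μ]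
    (E R₀ R₁ R : Ω → Bool)
    (hEmeas : Measurable E) (hR₀meas : Measurable R₀) (hR₁meas : Measurable R₁)
    (hR : R = fun ω => if E ω then R₁ ω else R₀ ω)
    (hindep : IndepFun E (fun ω => (R₀ ω, R₁ ω)) μ)
    (hpos1 : 0 < μ {ω | E ω = true}) (hpos0 : 0 < μ {ω | E ω = false})
    (p₁ p₀ : ℝ)
    (hp₁ : p₁ = (μ[|{ω | E ω = true}] {ω | R ω = true}).toReal)
    (hp₀ : p₀ = (μ[|{ω | E ω = false}] {ω | R ω = true}).toReal)
    (hp₁pos : 0 < p₁) (hp₀pos : 0 < p₀)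
    (RR : ℝ) (hRR : RR = p₁ / p₀)
    (PC : ℝ)
    (hPC : PC = (μ[|{ω | E ω = true ∧ R₁ ω = true}] {ω | R₀ ω = false}).toReal) :
    PC ≥ max 0 (1 - 1 / RR) :=
  pc_lower_bound_general μ E R₀ R₁ R hEmeas hR₀meas hR₁meas hR hindep hpos1 hpos0 p₁ p₀ hp₁ hp₀
    hp₁pos RR hRR PC hPC
end

section
/- In the basic potential-outcome setup with no confounding, assuming ℙ(E=1) > 0, ℙ(E=0) > 0 and ℙ(R = 1 ∣ E = 1) > 0, the probability of causation satisfies the upper bound PC ≤ min(1, ℙ(R = 0 ∣ E = 0)/ℙ(R = 1 ∣ E = 1)). -/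
open MeasureTheory ProbabilityTheory Set

/-- **Upper bound on the probability of causation (basic setup, no confounding).**
In the basic potential-outcome setup (`E` the binary exposure, `R₀, R₁` the binary
potential responses, observed response `R = R₁` on `{E = 1}` and `R = R₀` on `{E = 0}`,
and `E` independent of the pair `(R₀, R₁)`), assuming `ℙ(E=1) > 0`, `ℙ(E=0) > 0` and
`ℙ(R=1 ∣ E=1) > 0`, the probability of causation `PC = ℙ(R₀ = 0 ∣ E = 1, R₁ = 1)`
satisfies `PC ≤ min 1 (ℙ(R=0 ∣ E=0) / ℙ(R=1 ∣ E=1))`. -/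
theorem pc_upper_bound
    {Ω : Type*} [MeasurableSpace Ω] (μ : Measure Ω) [IsProbabilityMeasure μ]
    (E R₀ R₁ R : Ω → Bool)
    (hEmeas : Measurable E) (hR₀meas : Measurable R₀) (hR₁meas : Measurable R₁)
    (hR : R = fun ω => if E ω then R₁ ω else R₀ ω)
    (hindep : IndepFun E (fun ω => (R₀ ω, R₁ ω)) μ)
    (hpos1 : 0 < μ {ω | E ω = true}) (hpos0 : 0 < μ {ω | E ω = false})
    (p₁ q₀ : ℝ)
    (hp₁ : p₁ = (μ[|{ω | E ω = true}] {ω | R ω = true}).toReal)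
    (hq₀ : q₀ = (μ[|{ω | E ω = false}] {ω | R ω = false}).toReal)
    (hp₁pos : 0 < p₁)
    (PC : ℝ)
    (hPC : PC = (μ[|{ω | E ω = true ∧ R₁ ω = true}] {ω | R₀ ω = false}).toReal) :
    PC ≤ min 1 (q₀ / p₁) := by
  classical
  set pair : Ω → Bool × Bool := fun ω => (R₀ ω, R₁ ω) with hpair
  have key : ∀ (s : Set Bool) (t : Set (Bool × Bool)), MeasurableSet t →
      μ (E ⁻¹' s ∩ pair ⁻¹' t) = μ (E ⁻¹' s) * μ (pair ⁻¹' t) := fun s t ht =>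
    hindep.measure_inter_preimage_eq_mul s t trivial ht
  set A : Set Ω := {ω | E ω = true} with hAdef
  set A' : Set Ω := {ω | E ω = false} with hA'def
  set B1 : Set Ω := {ω | R₁ ω = true} with hB1def
  set B0 : Set Ω := {ω | R₀ ω = false} with hB0def
  have hAm : MeasurableSet A := hEmeas (measurableSet_singleton true)
  have hA'm : MeasurableSet A' := hEmeas (measurableSet_singleton false)
  have hB1pre : pair ⁻¹' (univ ×ˢ {true}) = B1 := by ext ω; simp [hpair, hB1def]
  have hB0pre : pair ⁻¹' ({false} ×ˢ univ) = B0 := by ext ω; simp [hpair, hB0def]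
  have hB01pre : pair ⁻¹' ({false} ×ˢ {true}) = B0 ∩ B1 := by
    ext ω; simp [hpair, hB0def, hB1def]
  have hμA : μ A ≠ 0 := hpos1.ne'
  have hμA' : μ A' ≠ 0 := hpos0.ne'
  have hμAtop : μ A ≠ ⊤ := measure_ne_top μ A
  -- independence consequences
  have hmulB1 : μ (A ∩ B1) = μ A * μ B1 := by
    have := key {true} (univ ×ˢ {true}) (MeasurableSet.univ.prod (measurableSet_singleton _)); rwa [hB1pre] at this
  have hmulB0 : μ (A' ∩ B0) = μ A' * μ B0 := by
    have := key {false} ({false} ×ˢ univ) ((measurableSet_singleton _).prod MeasurableSet.univ); rwa [hB0pre] at this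
  have hmulB01 : μ (A ∩ (B0 ∩ B1)) = μ A * μ (B0 ∩ B1) := by
    have := key {true} ({false} ×ˢ {true}) ((measurableSet_singleton _).prod (measurableSet_singleton _)); rwa [hB01pre] at this
  -- identify observed-response events
  have hAR : A ∩ {ω | R ω = true} = A ∩ B1 := by
    ext ω
    simp only [hR, mem_inter_iff, mem_setOf_eq, hAdef, hB1def]
    cases hE : E ω <;> simp [hE]
  have hA'R : A' ∩ {ω | R ω = false} = A' ∩ B0 := by
    ext ω
    simp only [hR, mem_inter_iff, mem_setOf_eq, hA'def, hB0def]
    cases hE : E ω <;> simp [hE]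
  -- p₁ = (μ B1).toReal
  have hp₁' : p₁ = (μ B1).toReal := by
    rw [hp₁, cond_apply hAm, hAR, hmulB1, ← mul_assoc, ENNReal.inv_mul_cancel hμA hμAtop,
      one_mul]
  have hq₀' : q₀ = (μ B0).toReal := by
    rw [hq₀, cond_apply hA'm, hA'R, hmulB0, ← mul_assoc,
      ENNReal.inv_mul_cancel hμA' (measure_ne_top μ A'), one_mul]
  have hμB1 : μ B1 ≠ 0 := by
    intro h
    rw [hp₁', h] at hp₁pos
    simp at hp₁pos
  -- PC = (μ (B0 ∩ B1)).toReal / (μ B1).toReal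
  have hCset : {ω | E ω = true ∧ R₁ ω = true} = A ∩ B1 := rfl
  have hCB0 : (A ∩ B1) ∩ B0 = A ∩ (B0 ∩ B1) := by
    ext ω; simp only [mem_inter_iff]; tauto
  have hCm : MeasurableSet (A ∩ B1) :=
    hAm.inter (hR₁meas (measurableSet_singleton true))
  have hPC' : PC = (μ (B0 ∩ B1)).toReal / (μ B1).toReal := by
    rw [hPC, hCset, cond_apply hCm, hCB0, hmulB01, hmulB1,
      ENNReal.mul_inv (Or.inl hμA) (Or.inl hμAtop), mul_mul_mul_comm,
      ENNReal.inv_mul_cancel hμA hμAtop, one_mul, ENNReal.toReal_mul, ENNReal.toReal_inv]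
    ring
  have hle1 : (μ (B0 ∩ B1)).toReal ≤ (μ B1).toReal :=
    ENNReal.toReal_mono (measure_ne_top μ B1) (measure_mono inter_subset_right)
  have hle0 : (μ (B0 ∩ B1)).toReal ≤ (μ B0).toReal :=
    ENNReal.toReal_mono (measure_ne_top μ B0) (measure_mono inter_subset_left)
  have hb1pos : 0 < (μ B1).toReal := by rwa [hp₁'] at hp₁pos
  refine le_min ?_ ?_
  · rw [hPC']
    exact div_le_one_of_le₀ hle1 hb1pos.le
  · rw [hPC', hp₁', hq₀']
    gcongr
end

section
/- In the basic potential-outcome setup with no confounding, assuming ℙ(E=1) > 0, ℙ(E=0) > 0, ℙ(R = 1 ∣ E = 1) > 0 and ℙ(R = 1 ∣ E = 0) > 0, if the risk ratio RR = ℙ(R = 1 ∣ E = 1)/ℙ(R = 1 ∣ E = 0) exceeds 2, then the probability of causation exceeds 1/2: RR > 2 implies PC > 1/2. -/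
open MeasureTheory ProbabilityTheory

/-- **Risk ratio above 2 forces probability of causation above 1/2.**
In the basic potential-outcome setup (`E` the binary exposure, `R₀, R₁` the binary
potential responses, observed response `R = R₁` on `{E = 1}` and `R = R₀` on `{E = 0}`,
and `E` independent of the pair `(R₀, R₁)`), assuming `ℙ(E=1) > 0`, `ℙ(E=0) > 0`,
`ℙ(R=1 ∣ E=1) > 0` and `ℙ(R=1 ∣ E=0) > 0`, if the risk ratio
`RR = ℙ(R=1 ∣ E=1) / ℙ(R=1 ∣ E=0)` exceeds `2` then the probability of causation
`PC = ℙ(R₀ = 0 ∣ E = 1, R₁ = 1)` exceeds `1/2`. -/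
theorem rr_gt_two_implies_pc_gt_half
    {Ω : Type*} [MeasurableSpace Ω] (μ : Measure Ω) [IsProbabilityMeasure μ]
    (E R₀ R₁ R : Ω → Bool)
    (hEmeas : Measurable E) (hR₀meas : Measurable R₀) (hR₁meas : Measurable R₁)
    (hR : R = fun ω => if E ω then R₁ ω else R₀ ω)
    (hindep : IndepFun E (fun ω => (R₀ ω, R₁ ω)) μ)
    (hpos1 : 0 < μ {ω | E ω = true}) (hpos0 : 0 < μ {ω | E ω = false})
    (p₁ p₀ : ℝ)
    (hp₁ : p₁ = (μ[|{ω | E ω = true}] {ω | R ω = true}).toReal)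
    (hp₀ : p₀ = (μ[|{ω | E ω = false}] {ω | R ω = true}).toReal)
    (hp₁pos : 0 < p₁) (hp₀pos : 0 < p₀)
    (RR : ℝ) (hRR : RR = p₁ / p₀)
    (PC : ℝ)
    (hPC : PC = (μ[|{ω | E ω = true ∧ R₁ ω = true}] {ω | R₀ ω = false}).toReal)
    (hRRgt : RR > 2) :
    PC > 1 / 2 := by
  have hpair : Measurable (fun ω => (R₀ ω, R₁ ω)) := hR₀meas.prodMk hR₁meas
  have mA : MeasurableSet {ω | E ω = true} := hEmeas (MeasurableSet.singleton true)
  have mA0 : MeasurableSet {ω | E ω = false} := hEmeas (MeasurableSet.singleton false)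
  -- key independence products
  have hprod : ∀ (s : Set Bool) (t : Set (Bool × Bool)),
      μ (E ⁻¹' s ∩ (fun ω => (R₀ ω, R₁ ω)) ⁻¹' t)
        = μ (E ⁻¹' s) * μ ((fun ω => (R₀ ω, R₁ ω)) ⁻¹' t) := by
    intro s t
    exact hindep.measure_inter_preimage_eq_mul s t (Set.toFinite s).measurableSet
      (Set.toFinite t).measurableSet
  -- abbreviations
  set x := μ {ω | E ω = true} with hx
  set y := μ {ω | R₁ ω = true} with hy
  set b := μ {ω | R₀ ω = true} with hb
  set c := μ {ω | R₀ ω = false ∧ R₁ ω = true} with hc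
  have hxne : x ≠ 0 := hpos1.ne'
  have hxtop : x ≠ ⊤ := (measure_lt_top μ _).ne
  have hytop : y ≠ ⊤ := (measure_lt_top μ _).ne
  have hbtop : b ≠ ⊤ := (measure_lt_top μ _).ne
  have hctop : c ≠ ⊤ := (measure_lt_top μ _).ne
  -- p₁ = y.toReal
  have h1 : p₁ = y.toReal := by
    have hset : {ω | E ω = true} ∩ {ω | R ω = true}
        = E ⁻¹' {true} ∩ (fun ω => (R₀ ω, R₁ ω)) ⁻¹' {p | p.2 = true} := by
      ext ω
      simp only [Set.mem_inter_iff, Set.mem_setOf_eq, Set.mem_preimage,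
        Set.mem_singleton_iff, hR]
      by_cases h : E ω = true <;> simp [h]
    rw [hp₁, cond_apply mA, hset, hprod]
    have hA : E ⁻¹' {true} = {ω | E ω = true} := rfl
    have hB : (fun ω => (R₀ ω, R₁ ω)) ⁻¹' {p | p.2 = true} = {ω | R₁ ω = true} := rfl
    rw [hA, hB, ← hx, ← hy, ← mul_assoc, ENNReal.inv_mul_cancel hxne hxtop, one_mul]
  -- p₀ = b.toReal
  have h0 : p₀ = b.toReal := by
    have hset : {ω | E ω = false} ∩ {ω | R ω = true}
        = E ⁻¹' {false} ∩ (fun ω => (R₀ ω, R₁ ω)) ⁻¹' {p | p.1 = true} := by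
      ext ω
      simp only [Set.mem_inter_iff, Set.mem_setOf_eq, Set.mem_preimage,
        Set.mem_singleton_iff, hR]
      by_cases h : E ω = true <;> simp [h]
    rw [hp₀, cond_apply mA0, hset, hprod]
    have hA : E ⁻¹' {false} = {ω | E ω = false} := rfl
    have hB : (fun ω => (R₀ ω, R₁ ω)) ⁻¹' {p | p.1 = true} = {ω | R₀ ω = true} := rfl
    rw [hA, hB, ← hb, ← mul_assoc,
      ENNReal.inv_mul_cancel hpos0.ne' (measure_lt_top μ _).ne, one_mul]
  -- PC = c.toReal / y.toReal
  have mB : MeasurableSet {ω | E ω = true ∧ R₁ ω = true} := by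
    have : {ω | E ω = true ∧ R₁ ω = true}
        = E ⁻¹' {true} ∩ (fun ω => (R₀ ω, R₁ ω)) ⁻¹' {p | p.2 = true} := rfl
    rw [this]
    exact (hEmeas (Set.toFinite _).measurableSet).inter (hpair (Set.toFinite _).measurableSet)
  have hPCval : PC = c.toReal / y.toReal := by
    have hsetB : {ω | E ω = true ∧ R₁ ω = true}
        = E ⁻¹' {true} ∩ (fun ω => (R₀ ω, R₁ ω)) ⁻¹' {p | p.2 = true} := rfl
    have hsetN : {ω | E ω = true ∧ R₁ ω = true} ∩ {ω | R₀ ω = false}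
        = E ⁻¹' {true} ∩ (fun ω => (R₀ ω, R₁ ω)) ⁻¹' {p | p.1 = false ∧ p.2 = true} := by
      ext ω
      simp only [Set.mem_inter_iff, Set.mem_setOf_eq, Set.mem_preimage,
        Set.mem_singleton_iff]
      tauto
    rw [hPC, cond_apply mB, hsetN, hprod]
    have e1 : μ {ω | E ω = true ∧ R₁ ω = true} = x * y := by
      rw [hsetB, hprod]; rfl
    have e2 : (fun ω => (R₀ ω, R₁ ω)) ⁻¹' {p | p.1 = false ∧ p.2 = true}
        = {ω | R₀ ω = false ∧ R₁ ω = true} := rfl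
    have e3 : E ⁻¹' ({true} : Set Bool) = {ω | E ω = true} := rfl
    rw [e1, e2, e3, ← hx, ← hc]
    rw [ENNReal.toReal_mul, ENNReal.toReal_inv, ENNReal.toReal_mul, ENNReal.toReal_mul]
    have hxr : x.toReal ≠ 0 := by
      simp [ENNReal.toReal_ne_zero, hxne, hxtop]
    rw [mul_inv, div_eq_mul_inv]
    calc x.toReal⁻¹ * y.toReal⁻¹ * (x.toReal * c.toReal)
        = (x.toReal⁻¹ * x.toReal) * (c.toReal * y.toReal⁻¹) := by ring
      _ = c.toReal * y.toReal⁻¹ := by rw [inv_mul_cancel₀ hxr, one_mul]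
  -- inequality: y ≤ c + b
  have hineq : y.toReal ≤ c.toReal + b.toReal := by
    have : y ≤ c + b := by
      have hsub : {ω | R₁ ω = true}
          ⊆ {ω | R₀ ω = false ∧ R₁ ω = true} ∪ {ω | R₀ ω = true} := by
        intro ω hω
        rcases Bool.eq_false_or_eq_true (R₀ ω) with h | h
        · exact Or.inr h
        · exact Or.inl ⟨h, hω⟩
      calc y ≤ μ ({ω | R₀ ω = false ∧ R₁ ω = true} ∪ {ω | R₀ ω = true}) :=
              measure_mono hsub
        _ ≤ c + b := measure_union_le _ _
    calc y.toReal ≤ (c + b).toReal :=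
          ENNReal.toReal_mono (by simp [ENNReal.add_ne_top, hctop, hbtop]) this
      _ = c.toReal + b.toReal := ENNReal.toReal_add hctop hbtop
  -- finish with real arithmetic
  have hygt : 0 < y.toReal := h1 ▸ hp₁pos
  have hbgt : 0 < b.toReal := h0 ▸ hp₀pos
  have h2b : 2 * b.toReal < y.toReal := by
    have := hRRgt
    rw [hRR, h1, h0] at this
    exact (lt_div_iff₀ hbgt).mp this
  rw [hPCval, gt_iff_lt, lt_div_iff₀ hygt]
  have hcge : y.toReal - b.toReal ≤ c.toReal := by linarith
  linarith
end

section
/- A risk ratio below 2 does not imply that the probability of causation is below 1/2: there exist a probability space and binary random variables E, R₀, R₁ with E independent of (R₀, R₁), with ℙ(E=1), ℙ(E=0) > 0 and ℙ(R=1∣E=0) > 0, such that the risk ratio RR = ℙ(R = 1 ∣ E = 1)/ℙ(R = 1 ∣ E = 0) satisfies RR < 2 while the probability of causation satisfies PC > 1/2. -/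
open MeasureTheory ProbabilityTheory

noncomputable def νB : Measure Bool := (PMF.uniformOfFintype Bool).toMeasure

instance : IsProbabilityMeasure νB := PMF.toMeasure.isProbabilityMeasure _

lemma νB_singleton (b : Bool) : νB {b} = 1/2 := by
  rw [νB, PMF.toMeasure_apply_singleton _ _ (measurableSet_singleton b)]
  simp [PMF.uniformOfFintype_apply]

noncomputable def μP : Measure (Bool × Bool) := νB.prod νB

instance : IsProbabilityMeasure μP := by unfold μP; infer_instance

lemma μP_pair (a b : Bool) : μP {(a, b)} = 1/4 := by
  have : ({(a,b)} : Set (Bool × Bool)) = {a} ×ˢ {b} := by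
    ext ⟨x,y⟩; simp [Prod.ext_iff]
  rw [μP, this, Measure.prod_prod, νB_singleton, νB_singleton]
  simp only [one_div]
  rw [← ENNReal.mul_inv (Or.inl (by norm_num)) (Or.inr (by norm_num))]
  norm_num

lemma indep_fst_snd : IndepFun Prod.fst Prod.snd μP := by
  rw [indepFun_iff_measure_inter_preimage_eq_mul]
  intro s t hs ht
  have h1 : (Prod.fst ⁻¹' s ∩ Prod.snd ⁻¹' t : Set (Bool × Bool)) = s ×ˢ t := rfl
  have h2 : (Prod.fst ⁻¹' s : Set (Bool × Bool)) = s ×ˢ Set.univ := by ext ⟨x,y⟩; simp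
  have h3 : (Prod.snd ⁻¹' t : Set (Bool × Bool)) = Set.univ ×ˢ t := by ext ⟨x,y⟩; simp
  rw [h1, h2, h3, μP, Measure.prod_prod, Measure.prod_prod, Measure.prod_prod]
  rw [measure_univ, mul_one, one_mul]

example : True := trivial

lemma μP_fst (a : Bool) : μP {ω : Bool × Bool | ω.1 = a} = 1/2 := by
  have h : {ω : Bool × Bool | ω.1 = a} = {a} ×ˢ Set.univ := by
    ext ⟨x, y⟩; simp [eq_comm]
  rw [h, μP, Measure.prod_prod, νB_singleton, measure_univ, mul_one]

lemma condT : μP[|{ω : Bool × Bool | ω.1 = true}]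
    {ω : Bool × Bool | (if ω.1 then ω.2 else !ω.2) = true} = 1/2 := by
  rw [cond_apply .of_discrete]
  have h : {ω : Bool × Bool | ω.1 = true} ∩ {ω : Bool × Bool | (if ω.1 then ω.2 else !ω.2) = true}
      = {(true, true)} := by
    ext ⟨x, y⟩; cases x <;> cases y <;> simp
  rw [μP_fst, h, μP_pair, one_div, inv_inv]
  rw [(by norm_num : (4 : ENNReal) = 2 * 2), one_div, ENNReal.mul_inv (by norm_num) (by norm_num),
    ← mul_assoc, ENNReal.mul_inv_cancel (by norm_num) (by norm_num), one_mul]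

lemma condF : μP[|{ω : Bool × Bool | ω.1 = false}]
    {ω : Bool × Bool | (if ω.1 then ω.2 else !ω.2) = true} = 1/2 := by
  rw [cond_apply .of_discrete]
  have h : {ω : Bool × Bool | ω.1 = false} ∩ {ω : Bool × Bool | (if ω.1 then ω.2 else !ω.2) = true}
      = {(false, false)} := by
    ext ⟨x, y⟩; cases x <;> cases y <;> simp
  rw [μP_fst, h, μP_pair, one_div, inv_inv]
  rw [(by norm_num : (4 : ENNReal) = 2 * 2), one_div, ENNReal.mul_inv (by norm_num) (by norm_num),
    ← mul_assoc, ENNReal.mul_inv_cancel (by norm_num) (by norm_num), one_mul]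

lemma condPC : μP[|{ω : Bool × Bool | ω.1 = true ∧ ω.2 = true}]
    {ω : Bool × Bool | (!ω.2) = false} = 1 := by
  rw [cond_apply .of_discrete]
  have h1 : {ω : Bool × Bool | ω.1 = true ∧ ω.2 = true} = {(true, true)} := by
    ext ⟨x, y⟩; simp [Prod.ext_iff]
  have h2 : ({(true, true)} : Set (Bool × Bool)) ∩ {ω : Bool × Bool | (!ω.2) = false}
      = {(true, true)} := by
    ext ⟨x, y⟩; cases x <;> cases y <;> simp
  rw [h1, h2, μP_pair, ENNReal.inv_mul_cancel (by norm_num) (by norm_num)]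

/-- **`RR < 2` does not imply `PC < 1/2`.**
There exist a probability space and binary random variables `E, R₀, R₁` (exposure and
potential responses), with `E` independent of the pair `(R₀, R₁)`, with
`ℙ(E=1) > 0`, `ℙ(E=0) > 0` and `ℙ(R=1 ∣ E=0) > 0` (where `R = R₁` on `{E = 1}` and
`R = R₀` on `{E = 0}` is the observed response), such that the risk ratio
`RR = ℙ(R=1 ∣ E=1) / ℙ(R=1 ∣ E=0)` satisfies `RR < 2` while the probability of
causation `PC = ℙ(R₀ = 0 ∣ E = 1, R₁ = 1)` satisfies `PC > 1/2`. -/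
theorem rr_lt_two_not_implies_pc_lt_half :
    ∃ (Ω : Type) (_ : MeasurableSpace Ω) (μ : Measure Ω) (E R₀ R₁ : Ω → Bool),
      IsProbabilityMeasure μ ∧
      Measurable E ∧ Measurable R₀ ∧ Measurable R₁ ∧
      IndepFun E (fun ω => (R₀ ω, R₁ ω)) μ ∧
      0 < μ {ω | E ω = true} ∧ 0 < μ {ω | E ω = false} ∧
      0 < (μ[|{ω | E ω = false}] {ω | (if E ω then R₁ ω else R₀ ω) = true}).toReal ∧
      (μ[|{ω | E ω = true}] {ω | (if E ω then R₁ ω else R₀ ω) = true}).toReal /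
        (μ[|{ω | E ω = false}] {ω | (if E ω then R₁ ω else R₀ ω) = true}).toReal < 2 ∧
      (μ[|{ω | E ω = true ∧ R₁ ω = true}] {ω | R₀ ω = false}).toReal > 1 / 2 := by
  refine ⟨Bool × Bool, inferInstance, μP, Prod.fst, (fun ω => !ω.2), (fun ω => ω.2),
    inferInstance, measurable_fst, .of_discrete, measurable_snd, ?_, ?_, ?_, ?_, ?_, ?_⟩
  · have : (fun ω : Bool × Bool => (!ω.2, ω.2)) = (fun b => (!b, b)) ∘ Prod.snd := rfl
    rw [this]
    exact indep_fst_snd.comp measurable_id .of_discrete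
  · rw [μP_fst]; norm_num
  · rw [μP_fst]; norm_num
  · rw [condF]; norm_num [one_div, ENNReal.toReal_inv]
  · rw [condT, condF]; norm_num [one_div, ENNReal.toReal_inv]
  · rw [condPC]; norm_num
end

section
/- In the complete-mediator setup, where E, the pair (M₀,M₁), and the pair (R₀,R₁) are mutually independent, the observed response R is conditionally independent of the exposure E given the observed mediator M (the Markov property R ⟂ E ∣ M holds). -/
open MeasureTheory ProbabilityTheory

/-- **Markov property in the complete-mediator setup.**
`E` is the binary exposure, `M₀, M₁` the binary potential mediator values under
`E = 0, 1`, and `R₀, R₁` the binary potential response values under `M = 0, 1`.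
The three blocks `E`, `(M₀, M₁)`, `(R₀, R₁)` are mutually independent (expressed
elementarily: the product rule holds for all triples of sets, which for these discrete
codomains is exactly mutual independence).  The observed mediator is `M = M₁` on
`{E = 1}` and `M = M₀` on `{E = 0}`; the observed response is `R = R₁` on `{M = 1}`
and `R = R₀` on `{M = 0}`.  Then `R` is conditionally independent of `E` given `M`:
for every value `m` of `M` with `ℙ(M = m) > 0` and all values `r, e`,
`ℙ(R = r, E = e ∣ M = m) = ℙ(R = r ∣ M = m) · ℙ(E = e ∣ M = m)`. -/
theorem mediator_markov_property
    {Ω : Type*} [MeasurableSpace Ω] (μ : Measure Ω) [IsProbabilityMeasure μ]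
    (E M₀ M₁ R₀ R₁ M R : Ω → Bool)
    (hEmeas : Measurable E) (hM₀meas : Measurable M₀) (hM₁meas : Measurable M₁)
    (hR₀meas : Measurable R₀) (hR₁meas : Measurable R₁)
    (hindep : ∀ (a : Set Bool) (b c : Set (Bool × Bool)),
      μ (E ⁻¹' a ∩ (fun ω => (M₀ ω, M₁ ω)) ⁻¹' b ∩ (fun ω => (R₀ ω, R₁ ω)) ⁻¹' c) =
        μ (E ⁻¹' a) * μ ((fun ω => (M₀ ω, M₁ ω)) ⁻¹' b) *
          μ ((fun ω => (R₀ ω, R₁ ω)) ⁻¹' c))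
    (hM : M = fun ω => if E ω then M₁ ω else M₀ ω)
    (hR : R = fun ω => if M ω then R₁ ω else R₀ ω) :
    ∀ m : Bool, 0 < μ {ω | M ω = m} → ∀ r e : Bool,
      μ[|{ω | M ω = m}] ({ω | R ω = r} ∩ {ω | E ω = e}) =
        μ[|{ω | M ω = m}] {ω | R ω = r} * μ[|{ω | M ω = m}] {ω | E ω = e} := by
  intro m hm r e
  subst hR
  subst hM
  -- notation
  set Mo : Ω → Bool := fun ω => if E ω then M₁ ω else M₀ ω with hMo
  set Ro : Ω → Bool := fun ω => if Mo ω then R₁ ω else R₀ ω with hRo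
  have hMmeas : Measurable Mo := by
    apply Measurable.ite (hEmeas (measurableSet_singleton true)) hM₁meas hM₀meas
  have hRmeas : Measurable Ro := by
    apply Measurable.ite (hMmeas (measurableSet_singleton true)) hR₁meas hR₀meas
  set s : Set Ω := {ω | Mo ω = m} with hs
  have hsm : MeasurableSet s := hMmeas (measurableSet_singleton m)
  -- measure abbreviations
  set a : Bool → ENNReal := fun e' => μ {ω | E ω = e'} with ha
  set b : Bool → ENNReal := fun e' => μ {ω | (if e' then M₁ ω else M₀ ω) = m} with hb
  set c : ENNReal := μ {ω | (if m then R₁ ω else R₀ ω) = r} with hc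
  -- key three-way products
  have key : ∀ e' : Bool, μ ({ω | E ω = e'} ∩ s ∩ {ω | Ro ω = r}) = a e' * b e' * c := by
    intro e'
    have hset : {ω | E ω = e'} ∩ s ∩ {ω | Ro ω = r} =
        E ⁻¹' {e'} ∩ (fun ω => (M₀ ω, M₁ ω)) ⁻¹' {p | (if e' then p.2 else p.1) = m}
          ∩ (fun ω => (R₀ ω, R₁ ω)) ⁻¹' {p | (if m then p.2 else p.1) = r} := by
      ext ω
      simp only [hs, hRo, hMo, Set.mem_inter_iff, Set.mem_setOf_eq, Set.mem_preimage,
        Set.mem_singleton_iff]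
      constructor
      · rintro ⟨⟨h1, h2⟩, h3⟩
        subst h1; subst h2
        exact ⟨⟨rfl, rfl⟩, h3⟩
      · rintro ⟨⟨h1, h2⟩, h3⟩
        subst h1
        refine ⟨⟨rfl, h2⟩, ?_⟩
        rw [h2]
        exact h3
    rw [hset, hindep]
    rfl
  have key2 : ∀ e' : Bool, μ ({ω | E ω = e'} ∩ s) = a e' * b e' := by
    intro e'
    have hset : {ω | E ω = e'} ∩ s =
        E ⁻¹' {e'} ∩ (fun ω => (M₀ ω, M₁ ω)) ⁻¹' {p | (if e' then p.2 else p.1) = m}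
          ∩ (fun ω => (R₀ ω, R₁ ω)) ⁻¹' Set.univ := by
      ext ω
      simp only [hs, hMo, Set.mem_inter_iff, Set.mem_setOf_eq, Set.mem_preimage,
        Set.mem_singleton_iff, Set.mem_univ, and_true]
      constructor
      · rintro ⟨h1, h2⟩; subst h1; exact ⟨rfl, h2⟩
      · rintro ⟨h1, h2⟩; subst h1; exact ⟨rfl, h2⟩
    rw [hset, hindep]
    have : μ ((fun ω => (R₀ ω, R₁ ω)) ⁻¹' Set.univ) = 1 := by simp
    rw [this, mul_one]
    rfl
  -- partitions by E
  have hpart : ∀ t : Set Ω, MeasurableSet t →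
      μ t = μ ({ω | E ω = true} ∩ t) + μ ({ω | E ω = false} ∩ t) := by
    intro t ht
    have h1 : {ω | E ω = true} ∩ t = t ∩ (E ⁻¹' {true}) := by
      ext ω; simp [Set.mem_inter_iff, and_comm]
    have h2 : {ω | E ω = false} ∩ t = t \ (E ⁻¹' {true}) := by
      ext ω; simp [Set.mem_inter_iff, Set.mem_diff, and_comm]
    rw [h1, h2, measure_inter_add_diff t (hEmeas (measurableSet_singleton true))]
  have hRr : MeasurableSet {ω | Ro ω = r} := hRmeas (measurableSet_singleton r)
  -- μ s
  have hμs : μ s = a true * b true + a false * b false := by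
    rw [hpart s hsm, key2 true, key2 false]
  -- μ (s ∩ {Ro = r}) = μ s * c
  have hsR : μ (s ∩ {ω | Ro ω = r}) = μ s * c := by
    have := hpart (s ∩ {ω | Ro ω = r}) (hsm.inter hRr)
    rw [this, ← Set.inter_assoc, ← Set.inter_assoc, key true, key false, hμs]
    ring
  -- μ (s ∩ {E = e}) = a e * b e
  have hsE : μ (s ∩ {ω | E ω = e}) = a e * b e := by rw [Set.inter_comm]; exact key2 e
  -- μ (s ∩ ({Ro=r} ∩ {E=e}))
  have hsRE : μ (s ∩ ({ω | Ro ω = r} ∩ {ω | E ω = e})) = a e * b e * c := by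
    have hset : s ∩ ({ω | Ro ω = r} ∩ {ω | E ω = e}) = {ω | E ω = e} ∩ s ∩ {ω | Ro ω = r} := by
      ext ω; simp only [Set.mem_inter_iff, Set.mem_setOf_eq]; tauto
    rw [hset, key e]
  -- finish
  rw [cond_apply hsm, cond_apply hsm, cond_apply hsm, hsRE, hsR, hsE]
  have hne : μ s ≠ 0 := hm.ne'
  have htop : μ s ≠ ⊤ := measure_ne_top μ s
  rw [← mul_assoc ((μ s)⁻¹) (μ s) c, ENNReal.inv_mul_cancel hne htop, one_mul]
  ring
end

section
/- In the complete-mediator setup, assuming ℙ(E=1) > 0, ℙ(E=0) > 0, ℙ(R = 1 ∣ E = 1) > 0 and ℙ(R = 1 ∣ E = 0) > 0, the probability of causation satisfies the lower bound PC ≥ max(0, 1 − ℙ(R = 1 ∣ E = 0)/ℙ(R = 1 ∣ E = 1)). -/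
open MeasureTheory ProbabilityTheory

/-!
The exposure enters the response only through the latent state `U = ((M₀, M₁), (R₀, R₁))`,
which is independent of `E`: `R = ψ(E, U)` and `R(e) = ψ(e, U)` for a fixed map `ψ`. Hence
conditioning on `E = e` turns `ℙ(R = 1 ∣ E = e)` into `ℙ(R(e) = 1)`, and conditioning on
`E = 1` drops out of `PC`, leaving `PC = ℙ(R(0) = 0 ∣ R(1) = 1)`. Finally
`ℙ(R(0) = 1 ∣ R(1) = 1) ≤ ℙ(R(0) = 1) / ℙ(R(1) = 1)`.
-/

section Independence

variable {Ω α β γ : Type*} [MeasurableSpace Ω] {μ : Measure Ω}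

lemma measure_inter_preimage_eq_mul_of_forall_singleton [MeasurableSpace β]
    [MeasurableSingletonClass β] [Countable β] {A : Set Ω} {Y : Ω → β} (hY : Measurable Y)
    (h : ∀ y, μ (A ∩ Y ⁻¹' {y}) = μ A * μ (Y ⁻¹' {y})) (S : Set β) :
    μ (A ∩ Y ⁻¹' S) = μ A * μ (Y ⁻¹' S) := by
  have hmap : (μ.restrict A).map Y = μ A • μ.map Y := Measure.ext_of_singleton fun y => by
    rw [Measure.map_apply hY (measurableSet_singleton y),
      Measure.restrict_apply (hY (measurableSet_singleton y)), Measure.smul_apply,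
      Measure.map_apply hY (measurableSet_singleton y), Set.inter_comm, h, smul_eq_mul]
  have hS := congrArg (· S) hmap
  simpa [Measure.map_apply hY MeasurableSet.of_discrete,
    Measure.restrict_apply (hY MeasurableSet.of_discrete), Set.inter_comm] using hS

lemma indepFun_prodMk_of_measure_inter_preimage_eq_mul [IsProbabilityMeasure μ]
    [MeasurableSpace α] [MeasurableSpace β] [MeasurableSingletonClass β] [Countable β]
    [MeasurableSpace γ] [MeasurableSingletonClass γ] [Countable γ]
    {X : Ω → α} {Y : Ω → β} {Z : Ω → γ} (hY : Measurable Y) (hZ : Measurable Z)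
    (h : ∀ (a : Set α) (b : Set β) (c : Set γ),
      μ (X ⁻¹' a ∩ Y ⁻¹' b ∩ Z ⁻¹' c) = μ (X ⁻¹' a) * μ (Y ⁻¹' b) * μ (Z ⁻¹' c)) :
    IndepFun X (fun ω => (Y ω, Z ω)) μ := by
  rw [indepFun_iff_measure_inter_preimage_eq_mul]
  intro a S _ _
  refine measure_inter_preimage_eq_mul_of_forall_singleton (hY.prodMk hZ) (fun ⟨b, c⟩ => ?_) S
  have hYZ := h Set.univ {b} {c}
  simp only [Set.preimage_univ, Set.univ_inter, measure_univ, one_mul] at hYZ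
  rw [← Set.singleton_prod_singleton, Set.mk_preimage_prod, ← Set.inter_assoc, h, hYZ, mul_assoc]

end Independence

section Conditioning

variable {Ω : Type*} [MeasurableSpace Ω] {μ : Measure Ω} {A B C : Set Ω}

lemma cond_eq_of_measure_inter_eq_mul [IsFiniteMeasure μ] (hC : MeasurableSet C)
    (hA : μ A ≠ 0) (hAC : μ (A ∩ C) = μ A * μ C) : μ[C | A] = μ C := by
  rw [cond_apply' hC, hAC, ← mul_assoc, ENNReal.inv_mul_cancel hA (measure_ne_top μ A), one_mul]

lemma cond_inter_eq_cond_of_measure_inter_eq_mul [IsFiniteMeasure μ] (hC : MeasurableSet C)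
    (hA : μ A ≠ 0) (hAB : μ (A ∩ B) = μ A * μ B) (hABC : μ (A ∩ (B ∩ C)) = μ A * μ (B ∩ C)) :
    μ[C | A ∩ B] = μ[C | B] := by
  rw [cond_apply' hC, cond_apply' hC, Set.inter_assoc, hAB, hABC,
    ENNReal.mul_inv (Or.inl hA) (Or.inl (measure_ne_top μ A)), mul_mul_mul_comm,
    ENNReal.inv_mul_cancel hA (measure_ne_top μ A), one_mul]

lemma one_sub_div_le_cond_compl [IsProbabilityMeasure μ] (hB : μ B ≠ 0) (hC : MeasurableSet C) :
    1 - (μ C).toReal / (μ B).toReal ≤ (μ[Cᶜ | B]).toReal := by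
  have := cond_isProbabilityMeasure (μ := μ) hB
  have hle : μ[C | B] ≤ (μ B)⁻¹ * μ C := by
    rw [cond_apply' hC]
    gcongr
    exact Set.inter_subset_right
  rw [prob_compl_eq_one_sub hC, ENNReal.toReal_sub_of_le prob_le_one ENNReal.one_ne_top,
    ENNReal.toReal_one, div_eq_inv_mul, ← ENNReal.toReal_inv, ← ENNReal.toReal_mul]
  gcongr
  finiteness

end Conditioning

section ExogenousExposure

variable {Ω β : Type*} [MeasurableSpace Ω] {μ : Measure Ω} [IsProbabilityMeasure μ]
  [MeasurableSpace β] [DiscreteMeasurableSpace β] {E : Ω → Bool} {U : Ω → β} {ψ : Bool → β → Bool}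

lemma cond_response_eq_measure_potential (hE : Measurable E) (hU : Measurable U)
    (hEU : IndepFun E U μ) {e : Bool} (he : μ {ω | E ω = e} ≠ 0) :
    μ[{ω | ψ (E ω) (U ω) = true} | {ω | E ω = e}] = μ {ω | ψ e (U ω) = true} := by
  have hEe : MeasurableSet {ω | E ω = e} := hE (measurableSet_singleton e)
  have hobs : {ω | E ω = e} ∩ {ω | ψ (E ω) (U ω) = true} =
      {ω | E ω = e} ∩ U ⁻¹' {u | ψ e u = true} := by
    ext ω
    simp +contextual
  rw [← cond_inter_self hEe, hobs, cond_inter_self hEe]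
  exact cond_eq_of_measure_inter_eq_mul (hU MeasurableSet.of_discrete) he
    (hEU.measure_inter_preimage_eq_mul _ _ (measurableSet_singleton e) MeasurableSet.of_discrete)

lemma cond_setOf_eq_and_mem_eq_cond_preimage (hU : Measurable U) (hEU : IndepFun E U μ)
    {e : Bool} (he : μ {ω | E ω = e} ≠ 0) (S T : Set β) :
    μ[U ⁻¹' T | {ω | E ω = e ∧ U ω ∈ S}] = μ[U ⁻¹' T | U ⁻¹' S] := by
  have hindep (S' : Set β) : μ ({ω | E ω = e} ∩ U ⁻¹' S') = μ {ω | E ω = e} * μ (U ⁻¹' S') :=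
    hEU.measure_inter_preimage_eq_mul _ _ (measurableSet_singleton e) MeasurableSet.of_discrete
  exact cond_inter_eq_cond_of_measure_inter_eq_mul (hU MeasurableSet.of_discrete) he (hindep S)
    (hindep (S ∩ T))

theorem one_sub_div_le_probability_of_causation (hE : Measurable E) (hU : Measurable U)
    (hEU : IndepFun E U μ) (h₁ : μ {ω | E ω = true} ≠ 0) (h₀ : μ {ω | E ω = false} ≠ 0)
    (hp₁ : μ[{ω | ψ (E ω) (U ω) = true} | {ω | E ω = true}] ≠ 0) :
    1 - (μ[{ω | ψ (E ω) (U ω) = true} | {ω | E ω = false}]).toReal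
        / (μ[{ω | ψ (E ω) (U ω) = true} | {ω | E ω = true}]).toReal ≤
      (μ[{ω | ψ false (U ω) = false} | {ω | E ω = true ∧ ψ true (U ω) = true}]).toReal := by
  rw [cond_response_eq_measure_potential hE hU hEU h₁] at hp₁ ⊢
  rw [cond_response_eq_measure_potential hE hU hEU h₀]
  have hcompl : {ω | ψ false (U ω) = false} = {ω | ψ false (U ω) = true}ᶜ := by
    ext; simp
  calc _ ≤ (μ[{ω | ψ false (U ω) = true}ᶜ | {ω | ψ true (U ω) = true}]).toReal :=
        one_sub_div_le_cond_compl hp₁ (hU (.of_discrete (s := {u | ψ false u = true})))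
    _ = _ := by
      rw [hcompl]
      exact congrArg ENNReal.toReal
        (cond_setOf_eq_and_mem_eq_cond_preimage hU hEU h₁
          {u | ψ true u = true} {u | ψ false u = true}ᶜ).symm

end ExogenousExposure

/-- The latent state is `u = ((M₀, M₁), (R₀, R₁))`. -/
def mediatedResponse (e : Bool) (u : (Bool × Bool) × (Bool × Bool)) : Bool :=
  if (if e then u.1.2 else u.1.1) then u.2.2 else u.2.1

theorem mediator_pc_lower_bound_general
    {Ω : Type*} [MeasurableSpace Ω] (μ : Measure Ω) [IsProbabilityMeasure μ]
    (E M₀ M₁ R₀ R₁ M R Rp0 Rp1 : Ω → Bool)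
    (hEmeas : Measurable E) (hM₀meas : Measurable M₀) (hM₁meas : Measurable M₁)
    (hR₀meas : Measurable R₀) (hR₁meas : Measurable R₁)
    (hindep : ∀ (a : Set Bool) (b c : Set (Bool × Bool)),
      μ (E ⁻¹' a ∩ (fun ω => (M₀ ω, M₁ ω)) ⁻¹' b ∩ (fun ω => (R₀ ω, R₁ ω)) ⁻¹' c) =
        μ (E ⁻¹' a) * μ ((fun ω => (M₀ ω, M₁ ω)) ⁻¹' b) *
          μ ((fun ω => (R₀ ω, R₁ ω)) ⁻¹' c))
    (hM : M = fun ω => if E ω then M₁ ω else M₀ ω)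
    (hR : R = fun ω => if M ω then R₁ ω else R₀ ω)
    (hRp0 : Rp0 = fun ω => if M₀ ω then R₁ ω else R₀ ω)
    (hRp1 : Rp1 = fun ω => if M₁ ω then R₁ ω else R₀ ω)
    (hpos1 : 0 < μ {ω | E ω = true}) (hpos0 : 0 < μ {ω | E ω = false})
    (p₁ p₀ : ℝ)
    (hp₁ : p₁ = (μ[|{ω | E ω = true}] {ω | R ω = true}).toReal)
    (hp₀ : p₀ = (μ[|{ω | E ω = false}] {ω | R ω = true}).toReal)
    (hp₁pos : 0 < p₁)
    (PC : ℝ)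
    (hPC : PC = (μ[|{ω | E ω = true ∧ Rp1 ω = true}] {ω | Rp0 ω = false}).toReal) :
    PC ≥ max 0 (1 - p₀ / p₁) := by
  subst hM hR hRp0 hRp1 hp₁ hp₀ hPC
  have hMpair := hM₀meas.prodMk hM₁meas
  have hRpair := hR₀meas.prodMk hR₁meas
  have hEU := indepFun_prodMk_of_measure_inter_preimage_eq_mul hMpair hRpair hindep
  have hbound := one_sub_div_le_probability_of_causation (ψ := mediatedResponse) hEmeas
    (hMpair.prodMk hRpair) hEU hpos1.ne' hpos0.ne'
  exact max_le ENNReal.toReal_nonneg (hbound (ENNReal.toReal_pos_iff.mp hp₁pos).1.ne')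

/-- **Lower bound on the probability of causation in the complete-mediator setup.**
`E` is the binary exposure, `M₀, M₁` the binary potential mediator values under
`E = 0, 1`, and `R₀, R₁` the binary potential response values under `M = 0, 1`; the
three blocks `E`, `(M₀, M₁)`, `(R₀, R₁)` are mutually independent.  The observed
mediator is `M = M₁` on `{E = 1}` and `M = M₀` on `{E = 0}`; the observed response is
`R = R₁` on `{M = 1}` and `R = R₀` on `{M = 0}`.  The potential response to exposure
`e` is `R(e) = R₁` on `{Mₑ = 1}` and `R₀` on `{Mₑ = 0}` (here `Rp0 = R(0)`,
`Rp1 = R(1)`), and the probability of causation is `PC = ℙ(R(0) = 0 ∣ E = 1, R(1) = 1)`.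
Assuming `ℙ(E=1) > 0`, `ℙ(E=0) > 0`, `ℙ(R=1 ∣ E=1) > 0` and `ℙ(R=1 ∣ E=0) > 0`,
`PC ≥ max 0 (1 - ℙ(R=1 ∣ E=0) / ℙ(R=1 ∣ E=1))`. -/
theorem mediator_pc_lower_bound
    {Ω : Type*} [MeasurableSpace Ω] (μ : Measure Ω) [IsProbabilityMeasure μ]
    (E M₀ M₁ R₀ R₁ M R Rp0 Rp1 : Ω → Bool)
    (hEmeas : Measurable E) (hM₀meas : Measurable M₀) (hM₁meas : Measurable M₁)
    (hR₀meas : Measurable R₀) (hR₁meas : Measurable R₁)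
    (hindep : ∀ (a : Set Bool) (b c : Set (Bool × Bool)),
      μ (E ⁻¹' a ∩ (fun ω => (M₀ ω, M₁ ω)) ⁻¹' b ∩ (fun ω => (R₀ ω, R₁ ω)) ⁻¹' c) =
        μ (E ⁻¹' a) * μ ((fun ω => (M₀ ω, M₁ ω)) ⁻¹' b) *
          μ ((fun ω => (R₀ ω, R₁ ω)) ⁻¹' c))
    (hM : M = fun ω => if E ω then M₁ ω else M₀ ω)
    (hR : R = fun ω => if M ω then R₁ ω else R₀ ω)
    (hRp0 : Rp0 = fun ω => if M₀ ω then R₁ ω else R₀ ω)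
    (hRp1 : Rp1 = fun ω => if M₁ ω then R₁ ω else R₀ ω)
    (hpos1 : 0 < μ {ω | E ω = true}) (hpos0 : 0 < μ {ω | E ω = false})
    (p₁ p₀ : ℝ)
    (hp₁ : p₁ = (μ[|{ω | E ω = true}] {ω | R ω = true}).toReal)
    (hp₀ : p₀ = (μ[|{ω | E ω = false}] {ω | R ω = true}).toReal)
    (hp₁pos : 0 < p₁) (hp₀pos : 0 < p₀)
    (PC : ℝ)
    (hPC : PC = (μ[|{ω | E ω = true ∧ Rp1 ω = true}] {ω | Rp0 ω = false}).toReal) :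
    PC ≥ max 0 (1 - p₀ / p₁) :=
  mediator_pc_lower_bound_general μ E M₀ M₁ R₀ R₁ M R Rp0 Rp1 hEmeas hM₀meas hM₁meas hR₀meas hR₁meas
    hindep hM hR hRp0 hRp1 hpos1 hpos0 p₁ p₀ hp₁ hp₀ hp₁pos PC hPC
end

section
/- In the complete-mediator setup, assuming ℙ(E=1) > 0, ℙ(E=0) > 0, ℙ(M=1) > 0, ℙ(M=0) > 0 and ℙ(R = 1 ∣ E = 1) > 0, the probability of causation satisfies the upper bound PC ≤ N / ℙ(R = 1 ∣ E = 1), where, writing a = ℙ(M=0 ∣ E=0), b = ℙ(M=1 ∣ E=1), c = ℙ(R=0 ∣ M=0), d = ℙ(R=1 ∣ M=1), the numerator N equals a·c + (1−b)·(1−d) if a ≤ b and c ≤ d; b·c + (1−a)·(1−d) if a > b and c ≤ d; a·d + (1−b)·(1−c) if a ≤ b and c > d; and b·d + (1−a)·(1−c) if a > b and c > d. -/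
open MeasureTheory ProbabilityTheory

/-- **Upper bound on the probability of causation in the complete-mediator setup.**
`E` is the binary exposure, `M₀, M₁` the binary potential mediator values under
`E = 0, 1`, and `R₀, R₁` the binary potential response values under `M = 0, 1`; the
three blocks `E`, `(M₀, M₁)`, `(R₀, R₁)` are mutually independent.  The observed
mediator is `M = M₁` on `{E = 1}` and `M = M₀` on `{E = 0}`; the observed response is
`R = R₁` on `{M = 1}` and `R = R₀` on `{M = 0}`.  The potential response to exposure
`e` is `R(e) = R₁` on `{Mₑ = 1}` and `R₀` on `{Mₑ = 0}` (here `Rp0 = R(0)`,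
`Rp1 = R(1)`), and the probability of causation is `PC = ℙ(R(0) = 0 ∣ E = 1, R(1) = 1)`.
Writing `a = ℙ(M=0 ∣ E=0)`, `b = ℙ(M=1 ∣ E=1)`, `c = ℙ(R=0 ∣ M=0)`, `d = ℙ(R=1 ∣ M=1)`,
and assuming `ℙ(E=1) > 0`, `ℙ(E=0) > 0`, `ℙ(M=1) > 0`, `ℙ(M=0) > 0` and
`ℙ(R=1 ∣ E=1) > 0`, we have `PC ≤ N / ℙ(R=1 ∣ E=1)`, where
`N = a·c + (1-b)·(1-d)` if `a ≤ b` and `c ≤ d`; `N = b·c + (1-a)·(1-d)` if `a > b`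
and `c ≤ d`; `N = a·d + (1-b)·(1-c)` if `a ≤ b` and `c > d`; and
`N = b·d + (1-a)·(1-c)` if `a > b` and `c > d`. -/
theorem mediator_pc_upper_bound
    {Ω : Type*} [MeasurableSpace Ω] (μ : Measure Ω) [IsProbabilityMeasure μ]
    (E M₀ M₁ R₀ R₁ M R Rp0 Rp1 : Ω → Bool)
    (hEmeas : Measurable E) (hM₀meas : Measurable M₀) (hM₁meas : Measurable M₁)
    (hR₀meas : Measurable R₀) (hR₁meas : Measurable R₁)
    (hindep : ∀ (s : Set Bool) (b c : Set (Bool × Bool)),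
      μ (E ⁻¹' s ∩ (fun ω => (M₀ ω, M₁ ω)) ⁻¹' b ∩ (fun ω => (R₀ ω, R₁ ω)) ⁻¹' c) =
        μ (E ⁻¹' s) * μ ((fun ω => (M₀ ω, M₁ ω)) ⁻¹' b) *
          μ ((fun ω => (R₀ ω, R₁ ω)) ⁻¹' c))
    (hM : M = fun ω => if E ω then M₁ ω else M₀ ω)
    (hR : R = fun ω => if M ω then R₁ ω else R₀ ω)
    (hRp0 : Rp0 = fun ω => if M₀ ω then R₁ ω else R₀ ω)
    (hRp1 : Rp1 = fun ω => if M₁ ω then R₁ ω else R₀ ω)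
    (hposE1 : 0 < μ {ω | E ω = true}) (hposE0 : 0 < μ {ω | E ω = false})
    (hposM1 : 0 < μ {ω | M ω = true}) (hposM0 : 0 < μ {ω | M ω = false})
    (a b c d p₁ : ℝ)
    (ha : a = (μ[|{ω | E ω = false}] {ω | M ω = false}).toReal)
    (hb : b = (μ[|{ω | E ω = true}] {ω | M ω = true}).toReal)
    (hc : c = (μ[|{ω | M ω = false}] {ω | R ω = false}).toReal)
    (hd : d = (μ[|{ω | M ω = true}] {ω | R ω = true}).toReal)
    (hp₁ : p₁ = (μ[|{ω | E ω = true}] {ω | R ω = true}).toReal)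
    (hp₁pos : 0 < p₁)
    (N : ℝ)
    (hN : N = if a ≤ b then
                (if c ≤ d then a * c + (1 - b) * (1 - d) else a * d + (1 - b) * (1 - c))
              else
                (if c ≤ d then b * c + (1 - a) * (1 - d) else b * d + (1 - a) * (1 - c)))
    (PC : ℝ)
    (hPC : PC = (μ[|{ω | E ω = true ∧ Rp1 ω = true}] {ω | Rp0 ω = false}).toReal) :
    PC ≤ N / p₁ := by
  subst hM hR hRp0 hRp1
  -- every event defined from the five variables is measurable
  have hmeas5 : ∀ (P : Bool → Bool → Bool → Bool → Bool → Prop),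
      MeasurableSet {ω | P (E ω) (M₀ ω) (M₁ ω) (R₀ ω) (R₁ ω)} := by
    intro P
    have hmap : Measurable fun ω => (E ω, M₀ ω, M₁ ω, R₀ ω, R₁ ω) :=
      hEmeas.prodMk (hM₀meas.prodMk (hM₁meas.prodMk (hR₀meas.prodMk hR₁meas)))
    exact hmap ((Set.to_countable {q : Bool × Bool × Bool × Bool × Bool |
      P q.1 q.2.1 q.2.2.1 q.2.2.2.1 q.2.2.2.2}).measurableSet)
  have key : ∀ (se : Bool → Prop) (sm sr : Bool → Bool → Prop),
      μ {ω | se (E ω) ∧ sm (M₀ ω) (M₁ ω) ∧ sr (R₀ ω) (R₁ ω)} =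
        μ {ω | se (E ω)} * μ {ω | sm (M₀ ω) (M₁ ω)} * μ {ω | sr (R₀ ω) (R₁ ω)} := by
    intro se sm sr
    have h := hindep {x | se x} {p | sm p.1 p.2} {p | sr p.1 p.2}
    have hset : E ⁻¹' {x | se x} ∩ (fun ω => (M₀ ω, M₁ ω)) ⁻¹' {p | sm p.1 p.2} ∩
        (fun ω => (R₀ ω, R₁ ω)) ⁻¹' {p | sr p.1 p.2} =
        {ω | se (E ω) ∧ sm (M₀ ω) (M₁ ω) ∧ sr (R₀ ω) (R₁ ω)} := by
      ext ω; simp [Set.mem_preimage, and_assoc]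
    rw [hset] at h
    exact h
  have fin : ∀ s : Set Ω, μ s ≠ ⊤ := fun s => measure_ne_top μ s
  -- value of a
  have haval : a = (μ {ω | M₀ ω = false}).toReal := by
    have hm : MeasurableSet {ω | E ω = false} := hmeas5 fun e _ _ _ _ => e = false
    rw [ha, cond_apply hm μ]
    have hset : {ω | E ω = false} ∩ {ω | (if E ω then M₁ ω else M₀ ω) = false}
        = {ω | E ω = false ∧ M₀ ω = false ∧ True} := by
      ext ω; cases hE : E ω <;> simp [hE]
    have k : μ {ω | E ω = false ∧ M₀ ω = false ∧ True} =
        μ {ω | E ω = false} * μ {ω | M₀ ω = false} * μ {ω | (True : Prop)} :=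
      key (fun e => e = false) (fun m0 _ => m0 = false) (fun _ _ => True)
    rw [hset, k, Set.setOf_true, measure_univ, mul_one, ← mul_assoc,
      ENNReal.inv_mul_cancel hposE0.ne' (fin _), one_mul]
  -- value of b
  have hbval : b = (μ {ω | M₁ ω = true}).toReal := by
    have hm : MeasurableSet {ω | E ω = true} := hmeas5 fun e _ _ _ _ => e = true
    rw [hb, cond_apply hm μ]
    have hset : {ω | E ω = true} ∩ {ω | (if E ω then M₁ ω else M₀ ω) = true}
        = {ω | E ω = true ∧ M₁ ω = true ∧ True} := by
      ext ω; cases hE : E ω <;> simp [hE]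
    have k : μ {ω | E ω = true ∧ M₁ ω = true ∧ True} =
        μ {ω | E ω = true} * μ {ω | M₁ ω = true} * μ {ω | (True : Prop)} :=
      key (fun e => e = true) (fun _ m1 => m1 = true) (fun _ _ => True)
    rw [hset, k, Set.setOf_true, measure_univ, mul_one, ← mul_assoc,
      ENNReal.inv_mul_cancel hposE1.ne' (fin _), one_mul]
  -- measure of {M = false} and {M = true}
  have hMFsplit : μ {ω | (if E ω then M₁ ω else M₀ ω) = false} =
      μ {ω | E ω = true} * μ {ω | M₁ ω = false} +
        μ {ω | E ω = false} * μ {ω | M₀ ω = false} := by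
    have hd : Disjoint {ω | E ω = true ∧ M₁ ω = false ∧ True}
        {ω | E ω = false ∧ M₀ ω = false ∧ True} := by
      rw [Set.disjoint_left]; rintro ω ⟨h1, -⟩ ⟨h2, -⟩; simp [h1] at h2
    have hset : {ω | (if E ω then M₁ ω else M₀ ω) = false} =
        {ω | E ω = true ∧ M₁ ω = false ∧ True} ∪
          {ω | E ω = false ∧ M₀ ω = false ∧ True} := by
      ext ω; cases hE : E ω <;> simp [hE]
    have k1 : μ {ω | E ω = true ∧ M₁ ω = false ∧ True} =
        μ {ω | E ω = true} * μ {ω | M₁ ω = false} * μ {ω | (True : Prop)} :=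
      key (fun e => e = true) (fun _ m1 => m1 = false) (fun _ _ => True)
    have k2 : μ {ω | E ω = false ∧ M₀ ω = false ∧ True} =
        μ {ω | E ω = false} * μ {ω | M₀ ω = false} * μ {ω | (True : Prop)} :=
      key (fun e => e = false) (fun m0 _ => m0 = false) (fun _ _ => True)
    rw [hset, measure_union hd (hmeas5 fun e m0 _ _ _ => e = false ∧ m0 = false ∧ True),
      k1, k2, Set.setOf_true, measure_univ, mul_one, mul_one]
  have hMTsplit : μ {ω | (if E ω then M₁ ω else M₀ ω) = true} =
      μ {ω | E ω = true} * μ {ω | M₁ ω = true} +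
        μ {ω | E ω = false} * μ {ω | M₀ ω = true} := by
    have hd : Disjoint {ω | E ω = true ∧ M₁ ω = true ∧ True}
        {ω | E ω = false ∧ M₀ ω = true ∧ True} := by
      rw [Set.disjoint_left]; rintro ω ⟨h1, -⟩ ⟨h2, -⟩; simp [h1] at h2
    have hset : {ω | (if E ω then M₁ ω else M₀ ω) = true} =
        {ω | E ω = true ∧ M₁ ω = true ∧ True} ∪
          {ω | E ω = false ∧ M₀ ω = true ∧ True} := by
      ext ω; cases hE : E ω <;> simp [hE]
    have k1 : μ {ω | E ω = true ∧ M₁ ω = true ∧ True} =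
        μ {ω | E ω = true} * μ {ω | M₁ ω = true} * μ {ω | (True : Prop)} :=
      key (fun e => e = true) (fun _ m1 => m1 = true) (fun _ _ => True)
    have k2 : μ {ω | E ω = false ∧ M₀ ω = true ∧ True} =
        μ {ω | E ω = false} * μ {ω | M₀ ω = true} * μ {ω | (True : Prop)} :=
      key (fun e => e = false) (fun m0 _ => m0 = true) (fun _ _ => True)
    rw [hset, measure_union hd (hmeas5 fun e m0 _ _ _ => e = false ∧ m0 = true ∧ True),
      k1, k2, Set.setOf_true, measure_univ, mul_one, mul_one]
  -- value of c
  have hcval : c = (μ {ω | R₀ ω = false}).toReal := by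
    have hm : MeasurableSet {ω | (if E ω then M₁ ω else M₀ ω) = false} :=
      hmeas5 fun e m0 m1 _ _ => (if e then m1 else m0) = false
    rw [hc, cond_apply hm μ]
    have hset : {ω | (if E ω then M₁ ω else M₀ ω) = false} ∩
        {ω | (if (if E ω then M₁ ω else M₀ ω) then R₁ ω else R₀ ω) = false} =
        {ω | E ω = true ∧ M₁ ω = false ∧ R₀ ω = false} ∪
          {ω | E ω = false ∧ M₀ ω = false ∧ R₀ ω = false} := by
      ext ω; cases hE : E ω <;> cases hM0 : M₀ ω <;> cases hM1 : M₁ ω <;>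
        simp [hE, hM0, hM1]
    have hd : Disjoint {ω | E ω = true ∧ M₁ ω = false ∧ R₀ ω = false}
        {ω | E ω = false ∧ M₀ ω = false ∧ R₀ ω = false} := by
      rw [Set.disjoint_left]; rintro ω ⟨h1, -⟩ ⟨h2, -⟩; simp [h1] at h2
    have k1 : μ {ω | E ω = true ∧ M₁ ω = false ∧ R₀ ω = false} =
        μ {ω | E ω = true} * μ {ω | M₁ ω = false} * μ {ω | R₀ ω = false} :=
      key (fun e => e = true) (fun _ m1 => m1 = false) (fun r0 _ => r0 = false)
    have k2 : μ {ω | E ω = false ∧ M₀ ω = false ∧ R₀ ω = false} =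
        μ {ω | E ω = false} * μ {ω | M₀ ω = false} * μ {ω | R₀ ω = false} :=
      key (fun e => e = false) (fun m0 _ => m0 = false) (fun r0 _ => r0 = false)
    rw [hset, measure_union hd
        (hmeas5 fun e m0 _ r0 _ => e = false ∧ m0 = false ∧ r0 = false),
      k1, k2, ← add_mul, ← hMFsplit, ← mul_assoc,
      ENNReal.inv_mul_cancel hposM0.ne' (fin _), one_mul]
  -- value of d
  have hdval : d = (μ {ω | R₁ ω = true}).toReal := by
    have hm : MeasurableSet {ω | (if E ω then M₁ ω else M₀ ω) = true} :=
      hmeas5 fun e m0 m1 _ _ => (if e then m1 else m0) = true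
    rw [hd, cond_apply hm μ]
    have hset : {ω | (if E ω then M₁ ω else M₀ ω) = true} ∩
        {ω | (if (if E ω then M₁ ω else M₀ ω) then R₁ ω else R₀ ω) = true} =
        {ω | E ω = true ∧ M₁ ω = true ∧ R₁ ω = true} ∪
          {ω | E ω = false ∧ M₀ ω = true ∧ R₁ ω = true} := by
      ext ω; cases hE : E ω <;> cases hM0 : M₀ ω <;> cases hM1 : M₁ ω <;>
        simp [hE, hM0, hM1]
    have hd' : Disjoint {ω | E ω = true ∧ M₁ ω = true ∧ R₁ ω = true}
        {ω | E ω = false ∧ M₀ ω = true ∧ R₁ ω = true} := by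
      rw [Set.disjoint_left]; rintro ω ⟨h1, -⟩ ⟨h2, -⟩; simp [h1] at h2
    have k1 : μ {ω | E ω = true ∧ M₁ ω = true ∧ R₁ ω = true} =
        μ {ω | E ω = true} * μ {ω | M₁ ω = true} * μ {ω | R₁ ω = true} :=
      key (fun e => e = true) (fun _ m1 => m1 = true) (fun _ r1 => r1 = true)
    have k2 : μ {ω | E ω = false ∧ M₀ ω = true ∧ R₁ ω = true} =
        μ {ω | E ω = false} * μ {ω | M₀ ω = true} * μ {ω | R₁ ω = true} :=
      key (fun e => e = false) (fun m0 _ => m0 = true) (fun _ r1 => r1 = true)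
    rw [hset, measure_union hd'
        (hmeas5 fun e m0 _ _ r1 => e = false ∧ m0 = true ∧ r1 = true),
      k1, k2, ← add_mul, ← hMTsplit, ← mul_assoc,
      ENNReal.inv_mul_cancel hposM1.ne' (fin _), one_mul]
  -- value of p₁
  have hERsplit : μ ({ω | E ω = true} ∩
      {ω | (if (if E ω then M₁ ω else M₀ ω) then R₁ ω else R₀ ω) = true}) =
      μ {ω | E ω = true} * (μ {ω | M₁ ω = true} * μ {ω | R₁ ω = true} +
        μ {ω | M₁ ω = false} * μ {ω | R₀ ω = true}) := by
    have hset : {ω | E ω = true} ∩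
        {ω | (if (if E ω then M₁ ω else M₀ ω) then R₁ ω else R₀ ω) = true} =
        {ω | E ω = true ∧ M₁ ω = true ∧ R₁ ω = true} ∪
          {ω | E ω = true ∧ M₁ ω = false ∧ R₀ ω = true} := by
      ext ω; cases hE : E ω <;> cases hM1 : M₁ ω <;> simp [hE, hM1]
    have hd' : Disjoint {ω | E ω = true ∧ M₁ ω = true ∧ R₁ ω = true}
        {ω | E ω = true ∧ M₁ ω = false ∧ R₀ ω = true} := by
      rw [Set.disjoint_left]; rintro ω ⟨-, h1, -⟩ ⟨-, h2, -⟩; simp [h1] at h2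
    have k1 : μ {ω | E ω = true ∧ M₁ ω = true ∧ R₁ ω = true} =
        μ {ω | E ω = true} * μ {ω | M₁ ω = true} * μ {ω | R₁ ω = true} :=
      key (fun e => e = true) (fun _ m1 => m1 = true) (fun _ r1 => r1 = true)
    have k2 : μ {ω | E ω = true ∧ M₁ ω = false ∧ R₀ ω = true} =
        μ {ω | E ω = true} * μ {ω | M₁ ω = false} * μ {ω | R₀ ω = true} :=
      key (fun e => e = true) (fun _ m1 => m1 = false) (fun r0 _ => r0 = true)
    rw [hset, measure_union hd'
        (hmeas5 fun e _ m1 r0 _ => e = true ∧ m1 = false ∧ r0 = true),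
      k1, k2, mul_assoc, mul_assoc, ← mul_add]
  have hp₁val : p₁ = (μ {ω | M₁ ω = true} * μ {ω | R₁ ω = true} +
      μ {ω | M₁ ω = false} * μ {ω | R₀ ω = true}).toReal := by
    have hm : MeasurableSet {ω | E ω = true} := hmeas5 fun e _ _ _ _ => e = true
    rw [hp₁, cond_apply hm μ, hERsplit, ← mul_assoc,
      ENNReal.inv_mul_cancel hposE1.ne' (fin _), one_mul]
  -- value of PC
  have hPCval : PC = (μ {ω | M₀ ω = false ∧ M₁ ω = true} *
        μ {ω | R₀ ω = false ∧ R₁ ω = true} +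
      μ {ω | M₀ ω = true ∧ M₁ ω = false} *
        μ {ω | R₀ ω = true ∧ R₁ ω = false}).toReal /
      (μ {ω | M₁ ω = true} * μ {ω | R₁ ω = true} +
      μ {ω | M₁ ω = false} * μ {ω | R₀ ω = true}).toReal := by
    have hm : MeasurableSet {ω | E ω = true ∧ (if M₁ ω then R₁ ω else R₀ ω) = true} :=
      hmeas5 fun e _ m1 r0 r1 => e = true ∧ (if m1 then r1 else r0) = true
    rw [hPC, cond_apply hm μ]
    -- measure of the conditioning set
    have hSset : {ω | E ω = true ∧ (if M₁ ω then R₁ ω else R₀ ω) = true} =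
        {ω | E ω = true ∧ M₁ ω = true ∧ R₁ ω = true} ∪
          {ω | E ω = true ∧ M₁ ω = false ∧ R₀ ω = true} := by
      ext ω; cases hM1 : M₁ ω <;> simp [hM1]
    have hd' : Disjoint {ω | E ω = true ∧ M₁ ω = true ∧ R₁ ω = true}
        {ω | E ω = true ∧ M₁ ω = false ∧ R₀ ω = true} := by
      rw [Set.disjoint_left]; rintro ω ⟨-, h1, -⟩ ⟨-, h2, -⟩; simp [h1] at h2
    have k1 : μ {ω | E ω = true ∧ M₁ ω = true ∧ R₁ ω = true} =
        μ {ω | E ω = true} * μ {ω | M₁ ω = true} * μ {ω | R₁ ω = true} :=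
      key (fun e => e = true) (fun _ m1 => m1 = true) (fun _ r1 => r1 = true)
    have k2 : μ {ω | E ω = true ∧ M₁ ω = false ∧ R₀ ω = true} =
        μ {ω | E ω = true} * μ {ω | M₁ ω = false} * μ {ω | R₀ ω = true} :=
      key (fun e => e = true) (fun _ m1 => m1 = false) (fun r0 _ => r0 = true)
    have hS : μ {ω | E ω = true ∧ (if M₁ ω then R₁ ω else R₀ ω) = true} =
        μ {ω | E ω = true} * (μ {ω | M₁ ω = true} * μ {ω | R₁ ω = true} +
          μ {ω | M₁ ω = false} * μ {ω | R₀ ω = true}) := by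
      rw [hSset, measure_union hd'
          (hmeas5 fun e _ m1 r0 _ => e = true ∧ m1 = false ∧ r0 = true),
        k1, k2, mul_assoc, mul_assoc, ← mul_add]
    -- measure of the intersection
    have hIset : {ω | E ω = true ∧ (if M₁ ω then R₁ ω else R₀ ω) = true} ∩
        {ω | (if M₀ ω then R₁ ω else R₀ ω) = false} =
        {ω | E ω = true ∧ (M₀ ω = false ∧ M₁ ω = true) ∧
            (R₀ ω = false ∧ R₁ ω = true)} ∪
          {ω | E ω = true ∧ (M₀ ω = true ∧ M₁ ω = false) ∧
            (R₀ ω = true ∧ R₁ ω = false)} := by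
      ext ω; cases hM0 : M₀ ω <;> cases hM1 : M₁ ω <;> cases hR0 : R₀ ω <;>
        cases hR1 : R₁ ω <;> simp [hM0, hM1, hR0, hR1]
    have hdI : Disjoint {ω | E ω = true ∧ (M₀ ω = false ∧ M₁ ω = true) ∧
            (R₀ ω = false ∧ R₁ ω = true)}
        {ω | E ω = true ∧ (M₀ ω = true ∧ M₁ ω = false) ∧
            (R₀ ω = true ∧ R₁ ω = false)} := by
      rw [Set.disjoint_left]; rintro ω ⟨-, ⟨h1, -⟩, -⟩ ⟨-, ⟨h2, -⟩, -⟩; simp [h1] at h2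
    have j1 : μ {ω | E ω = true ∧ (M₀ ω = false ∧ M₁ ω = true) ∧
          (R₀ ω = false ∧ R₁ ω = true)} =
        μ {ω | E ω = true} * μ {ω | M₀ ω = false ∧ M₁ ω = true} *
          μ {ω | R₀ ω = false ∧ R₁ ω = true} :=
      key (fun e => e = true) (fun m0 m1 => m0 = false ∧ m1 = true)
        (fun r0 r1 => r0 = false ∧ r1 = true)
    have j2 : μ {ω | E ω = true ∧ (M₀ ω = true ∧ M₁ ω = false) ∧
          (R₀ ω = true ∧ R₁ ω = false)} =
        μ {ω | E ω = true} * μ {ω | M₀ ω = true ∧ M₁ ω = false} *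
          μ {ω | R₀ ω = true ∧ R₁ ω = false} :=
      key (fun e => e = true) (fun m0 m1 => m0 = true ∧ m1 = false)
        (fun r0 r1 => r0 = true ∧ r1 = false)
    have hI : μ ({ω | E ω = true ∧ (if M₁ ω then R₁ ω else R₀ ω) = true} ∩
        {ω | (if M₀ ω then R₁ ω else R₀ ω) = false}) =
        μ {ω | E ω = true} * (μ {ω | M₀ ω = false ∧ M₁ ω = true} *
            μ {ω | R₀ ω = false ∧ R₁ ω = true} +
          μ {ω | M₀ ω = true ∧ M₁ ω = false} *
            μ {ω | R₀ ω = true ∧ R₁ ω = false}) := by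
      rw [hIset, measure_union hdI
          (hmeas5 fun e m0 m1 r0 r1 => e = true ∧ (m0 = true ∧ m1 = false) ∧
            (r0 = true ∧ r1 = false)),
        j1, j2, mul_assoc, mul_assoc, ← mul_add]
    rw [hS, hI]
    have hzne : (μ {ω | M₁ ω = true} * μ {ω | R₁ ω = true} +
        μ {ω | M₁ ω = false} * μ {ω | R₀ ω = true}) ≠ 0 := by
      intro h
      rw [hp₁val, h] at hp₁pos
      simp at hp₁pos
    have hzfin : (μ {ω | M₁ ω = true} * μ {ω | R₁ ω = true} +
        μ {ω | M₁ ω = false} * μ {ω | R₀ ω = true}) ≠ ⊤ :=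
      ENNReal.add_ne_top.mpr ⟨ENNReal.mul_ne_top (fin _) (fin _),
        ENNReal.mul_ne_top (fin _) (fin _)⟩
    rw [ENNReal.mul_inv (Or.inl hposE1.ne') (Or.inl (fin _)), mul_mul_mul_comm,
      ENNReal.inv_mul_cancel hposE1.ne' (fin _), one_mul, ENNReal.toReal_mul,
      ENNReal.toReal_inv, inv_mul_eq_div]
  -- complements sum to one
  have hsum1 : ∀ f : Ω → Bool, MeasurableSet {ω | f ω = false} →
      (μ {ω | f ω = true}).toReal + (μ {ω | f ω = false}).toReal = 1 := by
    intro f hmf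
    have hd : Disjoint {ω | f ω = true} {ω | f ω = false} := by
      rw [Set.disjoint_left]; intro ω h1 h2
      simp only [Set.mem_setOf_eq] at h1 h2
      rw [h1] at h2; exact Bool.noConfusion h2
    have hu : {ω | f ω = true} ∪ {ω | f ω = false} = Set.univ := by
      ext ω; cases h : f ω <;> simp [h]
    have h1 : μ {ω | f ω = true} + μ {ω | f ω = false} = 1 := by
      rw [← measure_union hd hmf, hu, measure_univ]
    rw [← ENNReal.toReal_add (fin _) (fin _), h1, ENNReal.toReal_one]
  have hM0c : (μ {ω | M₀ ω = true}).toReal = 1 - a := by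
    have := hsum1 M₀ (hmeas5 fun _ m0 _ _ _ => m0 = false)
    rw [haval]; linarith
  have hM1c : (μ {ω | M₁ ω = false}).toReal = 1 - b := by
    have := hsum1 M₁ (hmeas5 fun _ _ m1 _ _ => m1 = false)
    rw [hbval]; linarith
  have hR0c : (μ {ω | R₀ ω = true}).toReal = 1 - c := by
    have := hsum1 R₀ (hmeas5 fun _ _ _ r0 _ => r0 = false)
    rw [hcval]; linarith
  have hR1c : (μ {ω | R₁ ω = false}).toReal = 1 - d := by
    have := hsum1 R₁ (hmeas5 fun _ _ _ _ r1 => r1 = false)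
    rw [hdval]; linarith
  -- Fréchet bounds
  have hx_a : (μ {ω | M₀ ω = false ∧ M₁ ω = true}).toReal ≤ a := by
    rw [haval]; exact ENNReal.toReal_mono (fin _) (measure_mono fun ω h => h.1)
  have hx_b : (μ {ω | M₀ ω = false ∧ M₁ ω = true}).toReal ≤ b := by
    rw [hbval]; exact ENNReal.toReal_mono (fin _) (measure_mono fun ω h => h.2)
  have hy_a : (μ {ω | M₀ ω = true ∧ M₁ ω = false}).toReal ≤ 1 - a := by
    rw [← hM0c]; exact ENNReal.toReal_mono (fin _) (measure_mono fun ω h => h.1)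
  have hy_b : (μ {ω | M₀ ω = true ∧ M₁ ω = false}).toReal ≤ 1 - b := by
    rw [← hM1c]; exact ENNReal.toReal_mono (fin _) (measure_mono fun ω h => h.2)
  have hu_c : (μ {ω | R₀ ω = false ∧ R₁ ω = true}).toReal ≤ c := by
    rw [hcval]; exact ENNReal.toReal_mono (fin _) (measure_mono fun ω h => h.1)
  have hu_d : (μ {ω | R₀ ω = false ∧ R₁ ω = true}).toReal ≤ d := by
    rw [hdval]; exact ENNReal.toReal_mono (fin _) (measure_mono fun ω h => h.2)
  have hv_c : (μ {ω | R₀ ω = true ∧ R₁ ω = false}).toReal ≤ 1 - c := by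
    rw [← hR0c]; exact ENNReal.toReal_mono (fin _) (measure_mono fun ω h => h.1)
  have hv_d : (μ {ω | R₀ ω = true ∧ R₁ ω = false}).toReal ≤ 1 - d := by
    rw [← hR1c]; exact ENNReal.toReal_mono (fin _) (measure_mono fun ω h => h.2)
  -- the numerator is at most N
  have hnum : (μ {ω | M₀ ω = false ∧ M₁ ω = true} *
        μ {ω | R₀ ω = false ∧ R₁ ω = true} +
      μ {ω | M₀ ω = true ∧ M₁ ω = false} *
        μ {ω | R₀ ω = true ∧ R₁ ω = false}).toReal ≤ N := by
    rw [ENNReal.toReal_add (ENNReal.mul_ne_top (fin _) (fin _))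
        (ENNReal.mul_ne_top (fin _) (fin _)),
      ENNReal.toReal_mul, ENNReal.toReal_mul, hN]
    split_ifs with hab hcd hcd
    · exact add_le_add
        (mul_le_mul hx_a hu_c ENNReal.toReal_nonneg
          (le_trans ENNReal.toReal_nonneg hx_a))
        (mul_le_mul hy_b hv_d ENNReal.toReal_nonneg
          (le_trans ENNReal.toReal_nonneg hy_b))
    · exact add_le_add
        (mul_le_mul hx_a hu_d ENNReal.toReal_nonneg
          (le_trans ENNReal.toReal_nonneg hx_a))
        (mul_le_mul hy_b hv_c ENNReal.toReal_nonneg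
          (le_trans ENNReal.toReal_nonneg hy_b))
    · exact add_le_add
        (mul_le_mul hx_b hu_c ENNReal.toReal_nonneg
          (le_trans ENNReal.toReal_nonneg hx_b))
        (mul_le_mul hy_a hv_d ENNReal.toReal_nonneg
          (le_trans ENNReal.toReal_nonneg hy_a))
    · exact add_le_add
        (mul_le_mul hx_b hu_d ENNReal.toReal_nonneg
          (le_trans ENNReal.toReal_nonneg hx_b))
        (mul_le_mul hy_a hv_c ENNReal.toReal_nonneg
          (le_trans ENNReal.toReal_nonneg hy_a))
  rw [hPCval, ← hp₁val]
  gcongr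
end

section
/- For all real numbers a, b, c, d in [0,1], the mediator-bound numerator N = min(a,b)·min(c,d) + (1 − max(a,b))·(1 − max(c,d)) satisfies N ≤ min( b·d + (1−b)·(1−c), a·c + (1−a)·(1−d) ). Consequently, in the complete-mediator setup with a = ℙ(M=0∣E=0), b = ℙ(M=1∣E=1), c = ℙ(R=0∣M=0), d = ℙ(R=1∣M=1), since ℙ(R=1∣E=1) = b·d + (1−b)·(1−c) and ℙ(R=0∣E=0) = a·c + (1−a)·(1−d), the mediator upper bound N/ℙ(R=1∣E=1) never exceeds the simple upper bound min(1, ℙ(R=0∣E=0)/ℙ(R=1∣E=1)). -/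
open MeasureTheory

/-- **The mediator upper bound never exceeds the simple upper bound.**
For all real numbers `a, b, c, d` in `[0,1]`, the mediator-bound numerator
`N = min a b * min c d + (1 - max a b) * (1 - max c d)` satisfies
`N ≤ min (b*d + (1-b)*(1-c)) (a*c + (1-a)*(1-d))`.  Consequently, in the
complete-mediator setup with `a = ℙ(M=0∣E=0)`, `b = ℙ(M=1∣E=1)`, `c = ℙ(R=0∣M=0)`,
`d = ℙ(R=1∣M=1)`, since `ℙ(R=1∣E=1) = b*d + (1-b)*(1-c)` and
`ℙ(R=0∣E=0) = a*c + (1-a)*(1-d)`, the mediator upper bound `N / ℙ(R=1∣E=1)` never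
exceeds the simple upper bound `min 1 (ℙ(R=0∣E=0) / ℙ(R=1∣E=1))`. -/
theorem mediator_bound_refines_simple_bound
    (a b c d : ℝ) (ha : a ∈ Set.Icc (0:ℝ) 1) (hb : b ∈ Set.Icc (0:ℝ) 1)
    (hc : c ∈ Set.Icc (0:ℝ) 1) (hd : d ∈ Set.Icc (0:ℝ) 1)
    (N : ℝ) (hN : N = min a b * min c d + (1 - max a b) * (1 - max c d)) :
    N ≤ min (b * d + (1 - b) * (1 - c)) (a * c + (1 - a) * (1 - d)) ∧
    (0 < b * d + (1 - b) * (1 - c) →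
      N / (b * d + (1 - b) * (1 - c)) ≤
        min 1 ((a * c + (1 - a) * (1 - d)) / (b * d + (1 - b) * (1 - c)))) := by
  obtain ⟨ha0, ha1⟩ := ha
  obtain ⟨hb0, hb1⟩ := hb
  obtain ⟨hc0, hc1⟩ := hc
  obtain ⟨hd0, hd1⟩ := hd
  have key : N ≤ min (b * d + (1 - b) * (1 - c)) (a * c + (1 - a) * (1 - d)) := by
    rcases le_total a b with hab | hab <;> rcases le_total c d with hcd | hcd <;>
      simp only [hN, min_eq_left, min_eq_right, max_eq_left, max_eq_right, hab, hcd,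
        le_min_iff] <;>
      constructor <;> nlinarith [mul_nonneg hb0 hd0, mul_nonneg ha0 hc0]
  refine ⟨key, fun hpos => ?_⟩
  have h1 := key.trans (min_le_left _ _)
  have h2 := key.trans (min_le_right _ _)
  rw [le_min_iff]
  constructor
  · rw [div_le_one hpos]; exact h1
  · gcongr
end

section
/- In the sufficient-covariate setup, fix a covariate value s with ℙ(E = 1, S = s) > 0, ℙ(E = 0, S = s) > 0, ℙ(R = 1 ∣ E = 1, S = s) > 0 and ℙ(R = 1 ∣ E = 0, S = s) > 0. Then the covariate-specific probability of causation PC_s = ℙ(R(s,0) = 0 ∣ E = 1, R(s,1) = 1, S = s) satisfies max(0, 1 − ℙ(R=1 ∣ E=0, S=s)/ℙ(R=1 ∣ E=1, S=s)) ≤ PC_s ≤ min(1, ℙ(R=0 ∣ E=0, S=s)/ℙ(R=1 ∣ E=1, S=s)). -/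
open MeasureTheory ProbabilityTheory

/-- **Bounds on the covariate-specific probability of causation.**
In the sufficient-covariate setup (covariate `S` in a finite type `𝒮`, potential
exposures `Epot s`, potential responses `Rpot s e`, the three blocks mutually
independent, observed `E = Epot (S ·) ·` and `R = Rpot (S ·) (E ·) ·`), fix a covariate
value `s` with `ℙ(E=1, S=s) > 0`, `ℙ(E=0, S=s) > 0`, `ℙ(R=1 ∣ E=1, S=s) > 0` and
`ℙ(R=1 ∣ E=0, S=s) > 0`.  Then the covariate-specific probability of causation
`PCs = ℙ(R(s,0) = 0 ∣ E = 1, R(s,1) = 1, S = s)` satisfies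
`max 0 (1 - ℙ(R=1∣E=0,S=s)/ℙ(R=1∣E=1,S=s)) ≤ PCs ≤
 min 1 (ℙ(R=0∣E=0,S=s)/ℙ(R=1∣E=1,S=s))`. -/
theorem covariate_specific_pc_bounds
    {Ω : Type*} [MeasurableSpace Ω] (μ : Measure Ω) [IsProbabilityMeasure μ]
    {𝒮 : Type*} [Fintype 𝒮] [MeasurableSpace 𝒮] [MeasurableSingletonClass 𝒮]
    (S : Ω → 𝒮) (Epot : 𝒮 → Ω → Bool) (Rpot : 𝒮 → Bool → Ω → Bool)
    (hSmeas : Measurable S) (hEpotmeas : ∀ s, Measurable (Epot s))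
    (hRpotmeas : ∀ s e, Measurable (Rpot s e))
    (hindep : ∀ (a : Set 𝒮) (b : Set (𝒮 → Bool)) (c : Set (𝒮 → Bool → Bool)),
      μ (S ⁻¹' a ∩ (fun ω s => Epot s ω) ⁻¹' b ∩ (fun ω s e => Rpot s e ω) ⁻¹' c) =
        μ (S ⁻¹' a) * μ ((fun ω s => Epot s ω) ⁻¹' b) *
          μ ((fun ω s e => Rpot s e ω) ⁻¹' c))
    (E R : Ω → Bool)
    (hE : E = fun ω => Epot (S ω) ω)
    (hRdef : R = fun ω => Rpot (S ω) (E ω) ω)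
    (s : 𝒮)
    (hpos1 : 0 < μ {ω | E ω = true ∧ S ω = s})
    (hpos0 : 0 < μ {ω | E ω = false ∧ S ω = s})
    (p₁s p₀s q₀s : ℝ)
    (hp₁s : p₁s = (μ[|{ω | E ω = true ∧ S ω = s}] {ω | R ω = true}).toReal)
    (hp₀s : p₀s = (μ[|{ω | E ω = false ∧ S ω = s}] {ω | R ω = true}).toReal)
    (hq₀s : q₀s = (μ[|{ω | E ω = false ∧ S ω = s}] {ω | R ω = false}).toReal)
    (hp₁spos : 0 < p₁s) (hp₀spos : 0 < p₀s)
    (PCs : ℝ)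
    (hPCs : PCs = (μ[|{ω | E ω = true ∧ Rpot s true ω = true ∧ S ω = s}]
      {ω | Rpot s false ω = false}).toReal) :
    max 0 (1 - p₀s / p₁s) ≤ PCs ∧ PCs ≤ min 1 (q₀s / p₁s) := by
  classical
  -- shorthand sets
  let ΦE : Ω → (𝒮 → Bool) := fun ω s' => Epot s' ω
  let ΨR : Ω → (𝒮 → Bool → Bool) := fun ω s' e => Rpot s' e ω
  -- basic measures
  have hmSne : μ (S ⁻¹' {s}) ≠ ⊤ := measure_ne_top μ _
  -- pairwise independence of (S = s) and (Epot s = e)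
  have hSE : ∀ b : Set (𝒮 → Bool),
      μ (S ⁻¹' {s} ∩ ΦE ⁻¹' b) = μ (S ⁻¹' {s}) * μ (ΦE ⁻¹' b) := by
    intro b
    have h := hindep {s} b Set.univ
    simpa [Set.preimage_univ, Set.inter_univ, measure_univ, mul_one] using h
  -- set identities
  have hAeq : {ω | E ω = true ∧ S ω = s} = S ⁻¹' {s} ∩ ΦE ⁻¹' {f | f s = true} := by
    ext ω
    simp only [Set.mem_setOf_eq, Set.mem_inter_iff, Set.mem_preimage,
      Set.mem_singleton_iff, hE, ΦE]
    constructor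
    · rintro ⟨h1, rfl⟩; exact ⟨rfl, h1⟩
    · rintro ⟨rfl, h1⟩; exact ⟨h1, rfl⟩
  have hA0eq : {ω | E ω = false ∧ S ω = s} = S ⁻¹' {s} ∩ ΦE ⁻¹' {f | f s = false} := by
    ext ω
    simp only [Set.mem_setOf_eq, Set.mem_inter_iff, Set.mem_preimage,
      Set.mem_singleton_iff, hE, ΦE]
    constructor
    · rintro ⟨h1, rfl⟩; exact ⟨rfl, h1⟩
    · rintro ⟨rfl, h1⟩; exact ⟨h1, rfl⟩
  have hAReq : {ω | E ω = true ∧ S ω = s} ∩ {ω | R ω = true}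
      = S ⁻¹' {s} ∩ ΦE ⁻¹' {f | f s = true} ∩ ΨR ⁻¹' {g | g s true = true} := by
    ext ω
    simp only [Set.mem_inter_iff, Set.mem_setOf_eq, Set.mem_preimage,
      Set.mem_singleton_iff, hE, hRdef, ΦE, ΨR]
    constructor
    · rintro ⟨⟨h1, rfl⟩, h2⟩
      refine ⟨⟨rfl, h1⟩, ?_⟩
      rwa [h1] at h2
    · rintro ⟨⟨rfl, h1⟩, h2⟩
      exact ⟨⟨h1, rfl⟩, by rwa [h1]⟩
  have hA0Req : {ω | E ω = false ∧ S ω = s} ∩ {ω | R ω = true}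
      = S ⁻¹' {s} ∩ ΦE ⁻¹' {f | f s = false} ∩ ΨR ⁻¹' {g | g s false = true} := by
    ext ω
    simp only [Set.mem_inter_iff, Set.mem_setOf_eq, Set.mem_preimage,
      Set.mem_singleton_iff, hE, hRdef, ΦE, ΨR]
    constructor
    · rintro ⟨⟨h1, rfl⟩, h2⟩
      refine ⟨⟨rfl, h1⟩, ?_⟩
      rwa [h1] at h2
    · rintro ⟨⟨rfl, h1⟩, h2⟩
      exact ⟨⟨h1, rfl⟩, by rwa [h1]⟩
  have hA0Qeq : {ω | E ω = false ∧ S ω = s} ∩ {ω | R ω = false}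
      = S ⁻¹' {s} ∩ ΦE ⁻¹' {f | f s = false} ∩ ΨR ⁻¹' {g | g s false = false} := by
    ext ω
    simp only [Set.mem_inter_iff, Set.mem_setOf_eq, Set.mem_preimage,
      Set.mem_singleton_iff, hE, hRdef, ΦE, ΨR]
    constructor
    · rintro ⟨⟨h1, rfl⟩, h2⟩
      refine ⟨⟨rfl, h1⟩, ?_⟩
      rwa [h1] at h2
    · rintro ⟨⟨rfl, h1⟩, h2⟩
      exact ⟨⟨h1, rfl⟩, by rwa [h1]⟩
  have hBeq : {ω | E ω = true ∧ Rpot s true ω = true ∧ S ω = s}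
      = S ⁻¹' {s} ∩ ΦE ⁻¹' {f | f s = true} ∩ ΨR ⁻¹' {g | g s true = true} := by
    ext ω
    simp only [Set.mem_setOf_eq, Set.mem_inter_iff, Set.mem_preimage,
      Set.mem_singleton_iff, hE, ΦE, ΨR]
    constructor
    · rintro ⟨h1, h2, rfl⟩; exact ⟨⟨rfl, h1⟩, h2⟩
    · rintro ⟨⟨rfl, h1⟩, h2⟩; exact ⟨h1, h2, rfl⟩
  have hBXeq : {ω | E ω = true ∧ Rpot s true ω = true ∧ S ω = s} ∩ {ω | Rpot s false ω = false}
      = S ⁻¹' {s} ∩ ΦE ⁻¹' {f | f s = true} ∩ ΨR ⁻¹' {g | g s true = true ∧ g s false = false} := by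
    ext ω
    simp only [Set.mem_inter_iff, Set.mem_setOf_eq, Set.mem_preimage,
      Set.mem_singleton_iff, hE, ΦE, ΨR]
    constructor
    · rintro ⟨⟨h1, h2, rfl⟩, h3⟩; exact ⟨⟨rfl, h1⟩, h2, h3⟩
    · rintro ⟨⟨rfl, h1⟩, h2, h3⟩; exact ⟨⟨h1, h2, rfl⟩, h3⟩
  -- measurability
  have hmPhi : ∀ e : Bool, MeasurableSet (ΦE ⁻¹' {f | f s = e}) := by
    intro e
    have : ΦE ⁻¹' {f | f s = e} = Epot s ⁻¹' {e} := rfl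
    rw [this]; exact (hEpotmeas s) (measurableSet_singleton e)
  have hmA1 : MeasurableSet {ω | E ω = true ∧ S ω = s} := by
    rw [hAeq]; exact (hSmeas (measurableSet_singleton s)).inter (hmPhi true)
  have hmA0 : MeasurableSet {ω | E ω = false ∧ S ω = s} := by
    rw [hA0eq]; exact (hSmeas (measurableSet_singleton s)).inter (hmPhi false)
  have hmB : MeasurableSet {ω | E ω = true ∧ Rpot s true ω = true ∧ S ω = s} := by
    rw [hBeq]
    refine ((hSmeas (measurableSet_singleton s)).inter (hmPhi true)).inter ?_
    have : ΨR ⁻¹' {g | g s true = true} = Rpot s true ⁻¹' {true} := rfl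
    rw [this]; exact (hRpotmeas s true) (measurableSet_singleton true)
  -- measure computations
  have hμA1 : μ {ω | E ω = true ∧ S ω = s}
      = μ (S ⁻¹' {s}) * μ (ΦE ⁻¹' {f | f s = true}) := by rw [hAeq]; exact hSE _
  have hμA0 : μ {ω | E ω = false ∧ S ω = s}
      = μ (S ⁻¹' {s}) * μ (ΦE ⁻¹' {f | f s = false}) := by rw [hA0eq]; exact hSE _
  have hμAR : μ ({ω | E ω = true ∧ S ω = s} ∩ {ω | R ω = true})
      = μ (S ⁻¹' {s}) * μ (ΦE ⁻¹' {f | f s = true}) * μ (ΨR ⁻¹' {g | g s true = true}) := by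
    rw [hAReq]; exact hindep _ _ _
  have hμA0R : μ ({ω | E ω = false ∧ S ω = s} ∩ {ω | R ω = true})
      = μ (S ⁻¹' {s}) * μ (ΦE ⁻¹' {f | f s = false}) * μ (ΨR ⁻¹' {g | g s false = true}) := by
    rw [hA0Req]; exact hindep _ _ _
  have hμA0Q : μ ({ω | E ω = false ∧ S ω = s} ∩ {ω | R ω = false})
      = μ (S ⁻¹' {s}) * μ (ΦE ⁻¹' {f | f s = false}) * μ (ΨR ⁻¹' {g | g s false = false}) := by
    rw [hA0Qeq]; exact hindep _ _ _
  have hμB : μ {ω | E ω = true ∧ Rpot s true ω = true ∧ S ω = s}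
      = μ (S ⁻¹' {s}) * μ (ΦE ⁻¹' {f | f s = true}) * μ (ΨR ⁻¹' {g | g s true = true}) := by
    rw [hBeq]; exact hindep _ _ _
  have hμBX : μ ({ω | E ω = true ∧ Rpot s true ω = true ∧ S ω = s} ∩ {ω | Rpot s false ω = false})
      = μ (S ⁻¹' {s}) * μ (ΦE ⁻¹' {f | f s = true})
        * μ (ΨR ⁻¹' {g | g s true = true ∧ g s false = false}) := by
    rw [hBXeq]; exact hindep _ _ _
  -- positivity and finiteness
  have ha1pos : 0 < μ (S ⁻¹' {s}) * μ (ΦE ⁻¹' {f | f s = true}) := hμA1 ▸ hpos1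
  have ha0pos : 0 < μ (S ⁻¹' {s}) * μ (ΦE ⁻¹' {f | f s = false}) := hμA0 ▸ hpos0
  have ha1fin : μ (S ⁻¹' {s}) * μ (ΦE ⁻¹' {f | f s = true}) ≠ ⊤ := by
    rw [← hμA1]; exact measure_ne_top μ _
  have ha0fin : μ (S ⁻¹' {s}) * μ (ΦE ⁻¹' {f | f s = false}) ≠ ⊤ := by
    rw [← hμA0]; exact measure_ne_top μ _
  -- conditional probabilities are unconditional Rpot probabilities
  have hp₁ : p₁s = (μ (ΨR ⁻¹' {g | g s true = true})).toReal := by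
    rw [hp₁s, cond_apply hmA1, hμA1, hμAR, ← mul_assoc,
      ENNReal.inv_mul_cancel ha1pos.ne' ha1fin, one_mul]
  have hp₀ : p₀s = (μ (ΨR ⁻¹' {g | g s false = true})).toReal := by
    rw [hp₀s, cond_apply hmA0, hμA0, hμA0R, ← mul_assoc,
      ENNReal.inv_mul_cancel ha0pos.ne' ha0fin, one_mul]
  have hq₀ : q₀s = (μ (ΨR ⁻¹' {g | g s false = false})).toReal := by
    rw [hq₀s, cond_apply hmA0, hμA0, hμA0Q, ← mul_assoc,
      ENNReal.inv_mul_cancel ha0pos.ne' ha0fin, one_mul]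
  -- r₁ is positive
  have hr1fin : μ (ΨR ⁻¹' {g | g s true = true}) ≠ ⊤ := measure_ne_top μ _
  have hr1pos : 0 < μ (ΨR ⁻¹' {g | g s true = true}) := by
    rcases eq_or_ne (μ (ΨR ⁻¹' {g | g s true = true})) 0 with h0 | h0
    · have h := hp₁spos
      rw [hp₁, h0] at h
      simp at h
    · exact pos_iff_ne_zero.mpr h0
  -- PCs = x / r₁
  have hPC : PCs = (μ (ΨR ⁻¹' {g | g s true = true ∧ g s false = false})).toReal
      / (μ (ΨR ⁻¹' {g | g s true = true})).toReal := by
    have hBpos : 0 < μ (S ⁻¹' {s}) * μ (ΦE ⁻¹' {f | f s = true})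
        * μ (ΨR ⁻¹' {g | g s true = true}) := ENNReal.mul_pos ha1pos.ne' hr1pos.ne'
    have hkey : (μ (S ⁻¹' {s}) * μ (ΦE ⁻¹' {f | f s = true})
          * μ (ΨR ⁻¹' {g | g s true = true}))⁻¹
        * (μ (S ⁻¹' {s}) * μ (ΦE ⁻¹' {f | f s = true})
          * μ (ΨR ⁻¹' {g | g s true = true ∧ g s false = false}))
        = (μ (ΨR ⁻¹' {g | g s true = true}))⁻¹
          * μ (ΨR ⁻¹' {g | g s true = true ∧ g s false = false}) := by
      rw [ENNReal.mul_inv (Or.inl ha1pos.ne') (Or.inl ha1fin), mul_mul_mul_comm,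
        ENNReal.inv_mul_cancel ha1pos.ne' ha1fin, one_mul]
    rw [hPCs, cond_apply hmB, hμB, hμBX, hkey, ENNReal.toReal_mul, ENNReal.toReal_inv,
      div_eq_inv_mul]
  -- basic inequalities between the Rpot measures
  have hxr : μ (ΨR ⁻¹' {g | g s true = true ∧ g s false = false})
      ≤ μ (ΨR ⁻¹' {g | g s true = true}) := measure_mono (fun ω h => h.1)
  have hxq : μ (ΨR ⁻¹' {g | g s true = true ∧ g s false = false})
      ≤ μ (ΨR ⁻¹' {g | g s false = false}) := measure_mono (fun ω h => h.2)
  have hsub : μ (ΨR ⁻¹' {g | g s true = true})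
      ≤ μ (ΨR ⁻¹' {g | g s true = true ∧ g s false = false})
        + μ (ΨR ⁻¹' {g | g s false = true}) := by
    refine le_trans (measure_mono ?_) (measure_union_le _ _)
    intro ω h
    rcases hb : Rpot s false ω with _ | _
    · exact Or.inl ⟨h, hb⟩
    · exact Or.inr hb
  -- pass to reals
  set X : ℝ := (μ (ΨR ⁻¹' {g | g s true = true ∧ g s false = false})).toReal with hX
  set P1 : ℝ := (μ (ΨR ⁻¹' {g | g s true = true})).toReal with hP1
  have hP1pos : 0 < P1 := by rw [hp₁] at hp₁spos; exact hp₁spos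
  have hXP1 : X ≤ P1 := ENNReal.toReal_le_toReal (measure_ne_top μ _) hr1fin |>.mpr hxr
  have hXQ : X ≤ q₀s := by
    rw [hq₀]
    exact ENNReal.toReal_le_toReal (measure_ne_top μ _) (measure_ne_top μ _) |>.mpr hxq
  have hP1X : P1 ≤ X + p₀s := by
    rw [hp₀]
    have h := ENNReal.toReal_le_toReal hr1fin
      (ENNReal.add_ne_top.mpr ⟨measure_ne_top μ _, measure_ne_top μ _⟩) |>.mpr hsub
    rwa [ENNReal.toReal_add (measure_ne_top μ _) (measure_ne_top μ _)] at h
  have hXnn : 0 ≤ X := ENNReal.toReal_nonneg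
  rw [hPC]
  constructor
  · refine max_le (by positivity) ?_
    have h1 : (P1 - p₀s) / P1 ≤ X / P1 := (div_le_div_iff_of_pos_right hP1pos).mpr (by linarith)
    have heq : 1 - p₀s / P1 = (P1 - p₀s) / P1 := by
      rw [sub_div, div_self hP1pos.ne']
    rw [hp₁, heq]
    exact h1
  · refine le_min ?_ ?_
    · exact (div_le_one hP1pos).mpr hXP1
    · rw [hp₁]
      exact (div_le_div_iff_of_pos_right hP1pos).mpr hXQ
end

section
/- In the sufficient-covariate setup, assume ℙ(E = e, S = s) > 0 for every s ∈ 𝒮 and e ∈ {0,1}, and ℙ(R = 1 ∣ E = 1) > 0. Then the probability of causation PC = ℙ(R(S,0) = 0 ∣ E = 1, R(S,1) = 1) satisfies the lower bound PC ≥ Δ / ℙ(R = 1 ∣ E = 1), where Δ = Σ_{s∈𝒮} ℙ(S=s ∣ E=1) · max(0, ℙ(R=1 ∣ E=1, S=s) − ℙ(R=1 ∣ E=0, S=s)). -/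
open MeasureTheory ProbabilityTheory

/-- **Lower bound on the probability of causation in the sufficient-covariate setup.**
In the sufficient-covariate setup (covariate `S` in a finite type `𝒮`, potential
exposures `Epot s`, potential responses `Rpot s e`, the three blocks mutually
independent, observed `E = Epot (S ·) ·` and `R = Rpot (S ·) (E ·) ·`), assume
`ℙ(E = e, S = s) > 0` for every `s` and `e`, and `ℙ(R=1 ∣ E=1) > 0`.  Then the
probability of causation `PC = ℙ(R(S,0) = 0 ∣ E = 1, R(S,1) = 1)` satisfies
`PC ≥ Δ / ℙ(R=1 ∣ E=1)`, where
`Δ = ∑ s, ℙ(S=s ∣ E=1) · max 0 (ℙ(R=1 ∣ E=1, S=s) - ℙ(R=1 ∣ E=0, S=s))`. -/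
theorem sufficient_covariate_pc_lower_bound
    {Ω : Type*} [MeasurableSpace Ω] (μ : Measure Ω) [IsProbabilityMeasure μ]
    {𝒮 : Type*} [Fintype 𝒮] [MeasurableSpace 𝒮] [MeasurableSingletonClass 𝒮]
    (S : Ω → 𝒮) (Epot : 𝒮 → Ω → Bool) (Rpot : 𝒮 → Bool → Ω → Bool)
    (hSmeas : Measurable S) (hEpotmeas : ∀ s, Measurable (Epot s))
    (hRpotmeas : ∀ s e, Measurable (Rpot s e))
    (hindep : ∀ (a : Set 𝒮) (b : Set (𝒮 → Bool)) (c : Set (𝒮 → Bool → Bool)),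
      μ (S ⁻¹' a ∩ (fun ω s => Epot s ω) ⁻¹' b ∩ (fun ω s e => Rpot s e ω) ⁻¹' c) =
        μ (S ⁻¹' a) * μ ((fun ω s => Epot s ω) ⁻¹' b) *
          μ ((fun ω s e => Rpot s e ω) ⁻¹' c))
    (E R : Ω → Bool)
    (hE : E = fun ω => Epot (S ω) ω)
    (hRdef : R = fun ω => Rpot (S ω) (E ω) ω)
    (hpos : ∀ (s : 𝒮) (e : Bool), 0 < μ {ω | E ω = e ∧ S ω = s})
    (p₁ : ℝ) (hp₁ : p₁ = (μ[|{ω | E ω = true}] {ω | R ω = true}).toReal)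
    (hp₁pos : 0 < p₁)
    (Δ : ℝ)
    (hΔ : Δ = ∑ s : 𝒮, (μ[|{ω | E ω = true}] {ω | S ω = s}).toReal *
      max 0 ((μ[|{ω | E ω = true ∧ S ω = s}] {ω | R ω = true}).toReal -
        (μ[|{ω | E ω = false ∧ S ω = s}] {ω | R ω = true}).toReal))
    (PC : ℝ)
    (hPC : PC = (μ[|{ω | E ω = true ∧ Rpot (S ω) true ω = true}]
      {ω | Rpot (S ω) false ω = false}).toReal) :
    PC ≥ Δ / p₁ := by
  classical
  -- nonemptiness
  have hΩ : Nonempty Ω := by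
    rcases isEmpty_or_nonempty Ω with h | h
    · have h1 : μ Set.univ = 1 := measure_univ
      rw [Set.eq_empty_of_isEmpty Set.univ, measure_empty] at h1
      exact absurd h1 zero_ne_one
    · exact h
  have h𝒮 : Nonempty 𝒮 := hΩ.map S
  -- key independence consequence
  have key : ∀ (s : 𝒮) (e : Bool) (c : Set (𝒮 → Bool → Bool)),
      μ (S ⁻¹' {s} ∩ {ω | Epot s ω = e} ∩ (fun ω s e => Rpot s e ω) ⁻¹' c)
        = μ (S ⁻¹' {s}) * μ {ω | Epot s ω = e} * μ ((fun ω s e => Rpot s e ω) ⁻¹' c) := by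
    intro s e c
    exact hindep {s} {f | f s = e} c
  have key2 : ∀ (s : 𝒮) (e : Bool),
      μ (S ⁻¹' {s} ∩ {ω | Epot s ω = e}) = μ (S ⁻¹' {s}) * μ {ω | Epot s ω = e} := by
    intro s e
    have h := key s e Set.univ
    simpa using h
  -- measurability
  have hSm : ∀ s : 𝒮, MeasurableSet (S ⁻¹' {s}) := fun s => hSmeas (measurableSet_singleton s)
  have hEm : ∀ (s : 𝒮) (e : Bool), MeasurableSet {ω | Epot s ω = e} :=
    fun s e => (hEpotmeas s) (measurableSet_singleton e)
  have hRm : ∀ (s : 𝒮) (e v : Bool), MeasurableSet {ω | Rpot s e ω = v} :=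
    fun s e v => (hRpotmeas s e) (measurableSet_singleton v)
  -- disjoint sum helper
  have hsum : ∀ (f : 𝒮 → Set Ω), (∀ s, MeasurableSet (f s)) → (∀ s, f s ⊆ S ⁻¹' {s}) →
      μ (⋃ s, f s) = ∑ s, μ (f s) := by
    intro f hm hsub
    rw [measure_iUnion ?_ hm, tsum_fintype]
    intro i j hij
    refine Set.disjoint_left.2 fun ω hi hj => hij ?_
    have h1 := hsub i hi
    have h2 := hsub j hj
    simp only [Set.mem_preimage, Set.mem_singleton_iff] at h1 h2
    rw [← h1, ← h2]
  -- set identities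
  have hES : ∀ (s : 𝒮) (e : Bool),
      {ω | E ω = e ∧ S ω = s} = S ⁻¹' {s} ∩ {ω | Epot s ω = e} := by
    intro s e
    ext ω
    simp only [hE, Set.mem_setOf_eq, Set.mem_inter_iff, Set.mem_preimage,
      Set.mem_singleton_iff]
    constructor
    · rintro ⟨h1, h2⟩; subst h2; exact ⟨rfl, h1⟩
    · rintro ⟨h1, h2⟩; subst h1; exact ⟨h2, rfl⟩
  have hE1 : {ω | E ω = true} = ⋃ s, S ⁻¹' {s} ∩ {ω | Epot s ω = true} := by
    ext ω
    simp only [hE, Set.mem_setOf_eq, Set.mem_iUnion, Set.mem_inter_iff, Set.mem_preimage,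
      Set.mem_singleton_iff]
    constructor
    · intro h; exact ⟨S ω, rfl, h⟩
    · rintro ⟨s, h1, h2⟩; subst h1; exact h2
  have hESR : ∀ (s : 𝒮) (e : Bool),
      {ω | E ω = e ∧ S ω = s} ∩ {ω | R ω = true}
        = S ⁻¹' {s} ∩ {ω | Epot s ω = e} ∩ {ω | Rpot s e ω = true} := by
    intro s e
    ext ω
    simp only [hE, hRdef, Set.mem_setOf_eq, Set.mem_inter_iff, Set.mem_preimage,
      Set.mem_singleton_iff]
    constructor
    · rintro ⟨⟨h1, h2⟩, h3⟩; subst h2; exact ⟨⟨rfl, h1⟩, by rwa [h1] at h3⟩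
    · rintro ⟨⟨h1, h2⟩, h3⟩; subst h1; exact ⟨⟨h2, rfl⟩, by rwa [h2]⟩
  have hE1R : {ω | E ω = true} ∩ {ω | R ω = true}
      = ⋃ s, S ⁻¹' {s} ∩ {ω | Epot s ω = true} ∩ {ω | Rpot s true ω = true} := by
    ext ω
    simp only [hE, hRdef, Set.mem_setOf_eq, Set.mem_inter_iff, Set.mem_iUnion,
      Set.mem_preimage, Set.mem_singleton_iff]
    constructor
    · rintro ⟨h1, h2⟩; exact ⟨S ω, ⟨rfl, h1⟩, by rwa [h1] at h2⟩
    · rintro ⟨s, ⟨h1, h2⟩, h3⟩; subst h1; exact ⟨h2, by rwa [h2]⟩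
  have hC : {ω | E ω = true ∧ Rpot (S ω) true ω = true}
      = {ω | E ω = true} ∩ {ω | R ω = true} := by
    ext ω
    simp only [hE, hRdef, Set.mem_setOf_eq, Set.mem_inter_iff]
    constructor
    · rintro ⟨h1, h2⟩; exact ⟨h1, by rwa [h1]⟩
    · rintro ⟨h1, h2⟩; exact ⟨h1, by rwa [h1] at h2⟩
  have hCR0 : {ω | E ω = true ∧ Rpot (S ω) true ω = true} ∩ {ω | Rpot (S ω) false ω = false}
      = ⋃ s, S ⁻¹' {s} ∩ {ω | Epot s ω = true}
          ∩ {ω | Rpot s true ω = true ∧ Rpot s false ω = false} := by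
    ext ω
    simp only [hE, Set.mem_setOf_eq, Set.mem_inter_iff, Set.mem_iUnion,
      Set.mem_preimage, Set.mem_singleton_iff]
    constructor
    · rintro ⟨⟨h1, h2⟩, h3⟩; exact ⟨S ω, ⟨rfl, h1⟩, h2, h3⟩
    · rintro ⟨s, ⟨h1, h2⟩, h3, h4⟩; subst h1; exact ⟨⟨h2, h3⟩, h4⟩
  have hE1S : ∀ s : 𝒮, {ω | E ω = true} ∩ {ω | S ω = s} = {ω | E ω = true ∧ S ω = s} := by
    intro s; ext ω; simp [Set.mem_inter_iff]
  -- measurability of events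
  have hmES : ∀ (s : 𝒮) (e : Bool), MeasurableSet {ω | E ω = e ∧ S ω = s} := by
    intro s e; rw [hES]; exact (hSm s).inter (hEm s e)
  have hmE1 : MeasurableSet {ω | E ω = true} := by
    rw [hE1]; exact MeasurableSet.iUnion fun s => (hSm s).inter (hEm s true)
  have hmC : MeasurableSet {ω | E ω = true ∧ Rpot (S ω) true ω = true} := by
    rw [hC, hE1R]
    exact MeasurableSet.iUnion fun s => ((hSm s).inter (hEm s true)).inter (hRm s true true)
  -- measure computations (ENNReal)
  have mES : ∀ (s : 𝒮) (e : Bool),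
      μ {ω | E ω = e ∧ S ω = s} = μ (S ⁻¹' {s}) * μ {ω | Epot s ω = e} := by
    intro s e; rw [hES]; exact key2 s e
  have mESR : ∀ (s : 𝒮) (e : Bool),
      μ ({ω | E ω = e ∧ S ω = s} ∩ {ω | R ω = true})
        = μ (S ⁻¹' {s}) * μ {ω | Epot s ω = e} * μ {ω | Rpot s e ω = true} := by
    intro s e; rw [hESR]; exact key s e {g | g s e = true}
  have mE1 : μ {ω | E ω = true} = ∑ s, μ (S ⁻¹' {s}) * μ {ω | Epot s ω = true} := by
    rw [hE1, hsum _ (fun s => (hSm s).inter (hEm s true))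
      (fun s => Set.inter_subset_left)]
    exact Finset.sum_congr rfl fun s _ => key2 s true
  have mE1R : μ ({ω | E ω = true} ∩ {ω | R ω = true})
      = ∑ s, μ (S ⁻¹' {s}) * μ {ω | Epot s ω = true} * μ {ω | Rpot s true ω = true} := by
    rw [hE1R, hsum _ (fun s => ((hSm s).inter (hEm s true)).inter (hRm s true true))
      (fun s => (Set.inter_subset_left.trans Set.inter_subset_left))]
    exact Finset.sum_congr rfl fun s _ => key s true {g | g s true = true}
  have mCR0 : μ ({ω | E ω = true ∧ Rpot (S ω) true ω = true}
        ∩ {ω | Rpot (S ω) false ω = false})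
      = ∑ s, μ (S ⁻¹' {s}) * μ {ω | Epot s ω = true}
          * μ {ω | Rpot s true ω = true ∧ Rpot s false ω = false} := by
    rw [hCR0, hsum _ ?_ (fun s => (Set.inter_subset_left.trans Set.inter_subset_left))]
    · exact Finset.sum_congr rfl fun s _ =>
        key s true {g | g s true = true ∧ g s false = false}
    · intro s
      exact ((hSm s).inter (hEm s true)).inter ((hRm s true true).inter (hRm s false false))
  -- real-valued quantities
  set x : 𝒮 → Bool → ℝ := fun s e => (μ {ω | E ω = e ∧ S ω = s}).toReal with hxdef
  set r : 𝒮 → Bool → ℝ := fun s e => (μ {ω | Rpot s e ω = true}).toReal with hrdef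
  set c : 𝒮 → ℝ := fun s => (μ {ω | Rpot s true ω = true ∧ Rpot s false ω = false}).toReal
    with hcdef
  set T : ℝ := (μ {ω | E ω = true}).toReal with hTdef
  have hfin : ∀ A : Set Ω, μ A ≠ ⊤ := fun A => measure_ne_top μ A
  have hxpos : ∀ (s : 𝒮) (e : Bool), 0 < x s e := by
    intro s e
    exact ENNReal.toReal_pos (hpos s e).ne' (hfin _)
  -- toReal versions of the measure computations
  have rT : T = ∑ s, x s true := by
    rw [hTdef, mE1, ENNReal.toReal_sum (fun s _ => ENNReal.mul_ne_top (hfin _) (hfin _))]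
    exact Finset.sum_congr rfl fun s _ => by rw [hxdef]; simp [mES s true]
  have hTpos : 0 < T := by
    rw [rT]
    exact Finset.sum_pos (fun s _ => hxpos s true) Finset.univ_nonempty
  -- conditional probability as ratio
  have condReal : ∀ (A B : Set Ω), MeasurableSet A →
      (μ[|A] B).toReal = (μ (A ∩ B)).toReal / (μ A).toReal := by
    intro A B hA
    rw [cond_apply hA, ENNReal.toReal_mul, ENNReal.toReal_inv, inv_mul_eq_div]
  -- p₁
  have rE1R : (μ ({ω | E ω = true} ∩ {ω | R ω = true})).toReal = ∑ s, x s true * r s true := by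
    rw [mE1R, ENNReal.toReal_sum (fun s _ => by
      exact ENNReal.mul_ne_top (ENNReal.mul_ne_top (hfin _) (hfin _)) (hfin _))]
    refine Finset.sum_congr rfl fun s _ => ?_
    rw [hxdef, hrdef]
    simp only [mES s true, ENNReal.toReal_mul]
  have hp₁' : p₁ = (∑ s, x s true * r s true) / T := by
    rw [hp₁, condReal _ _ hmE1, rE1R, hTdef]
  have hNpos : 0 < ∑ s, x s true * r s true := by
    have : (∑ s, x s true * r s true) = p₁ * T := by
      rw [hp₁']; field_simp
    rw [this]
    exact mul_pos hp₁pos hTpos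
  -- PC
  have hμC : μ {ω | E ω = true ∧ Rpot (S ω) true ω = true}
      = μ ({ω | E ω = true} ∩ {ω | R ω = true}) := by rw [hC]
  have rPC : PC = (∑ s, x s true * c s) / (∑ s, x s true * r s true) := by
    rw [hPC, condReal _ _ hmC, hμC, rE1R, mCR0,
      ENNReal.toReal_sum (fun s _ => by
        exact ENNReal.mul_ne_top (ENNReal.mul_ne_top (hfin _) (hfin _)) (hfin _))]
    congr 1
    refine Finset.sum_congr rfl fun s _ => ?_
    rw [hxdef, hcdef]
    simp only [mES s true, ENNReal.toReal_mul]
  -- Δ terms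
  have rCondS : ∀ s : 𝒮, (μ[|{ω | E ω = true}] {ω | S ω = s}).toReal = x s true / T := by
    intro s
    rw [condReal _ _ hmE1, hE1S s, hxdef, hTdef]
  have rCondR : ∀ (s : 𝒮) (e : Bool),
      (μ[|{ω | E ω = e ∧ S ω = s}] {ω | R ω = true}).toReal = r s e := by
    intro s e
    rw [condReal _ _ (hmES s e), mESR s e, mES s e, ENNReal.toReal_mul]
    have hA : (μ (S ⁻¹' {s}) * μ {ω | Epot s ω = e}).toReal ≠ 0 := by
      rw [← mES s e]; exact (hxpos s e).ne'
    exact mul_div_cancel_left₀ _ hA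
  -- Δ as a ratio
  have rΔ : Δ = (∑ s, x s true * max 0 (r s true - r s false)) / T := by
    rw [hΔ, Finset.sum_div]
    refine Finset.sum_congr rfl fun s _ => ?_
    rw [rCondS s, rCondR s true, rCondR s false, div_mul_eq_mul_div]
  -- pointwise inequality:  max 0 (r₁ - r₀) ≤ c
  have hcge : ∀ s : 𝒮, max 0 (r s true - r s false) ≤ c s := by
    intro s
    refine max_le ENNReal.toReal_nonneg ?_
    have hsub : {ω | Rpot s true ω = true}
        ⊆ {ω | Rpot s true ω = true ∧ Rpot s false ω = false}
          ∪ {ω | Rpot s false ω = true} := by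
      intro ω h
      by_cases h2 : Rpot s false ω = true
      · exact Or.inr h2
      · exact Or.inl ⟨h, by simpa using h2⟩
    have hle : μ {ω | Rpot s true ω = true}
        ≤ μ {ω | Rpot s true ω = true ∧ Rpot s false ω = false}
          + μ {ω | Rpot s false ω = true} :=
      (measure_mono hsub).trans (measure_union_le _ _)
    have h3 := ENNReal.toReal_mono (ENNReal.add_ne_top.2 ⟨hfin _, hfin _⟩) hle
    rw [ENNReal.toReal_add (hfin _) (hfin _)] at h3
    have h4 : r s true ≤ c s + r s false := h3
    linarith
  -- final computation
  have hΔp : Δ / p₁ = (∑ s, x s true * max 0 (r s true - r s false))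
      / (∑ s, x s true * r s true) := by
    rw [rΔ, hp₁']
    rw [div_div_div_cancel_right₀]
    exact hTpos.ne'
  rw [ge_iff_le, hΔp, rPC, div_le_div_iff₀ hNpos hNpos]
  have hsums : (∑ s, x s true * max 0 (r s true - r s false)) ≤ ∑ s, x s true * c s :=
    Finset.sum_le_sum fun s _ => mul_le_mul_of_nonneg_left (hcge s) (hxpos s true).le
  nlinarith [hNpos, hsums]
end

section
/- In the sufficient-covariate setup, assume ℙ(E = e, S = s) > 0 for every s ∈ 𝒮 and e ∈ {0,1}, and ℙ(R = 1 ∣ E = 1) > 0. Then the probability of causation PC = ℙ(R(S,0) = 0 ∣ E = 1, R(S,1) = 1) satisfies the upper bound PC ≤ 1 − Γ / ℙ(R = 1 ∣ E = 1), where Γ = Σ_{s∈𝒮} ℙ(S=s ∣ E=1) · max(0, ℙ(R=1 ∣ E=1, S=s) − ℙ(R=0 ∣ E=0, S=s)). -/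
/-!
Let `C = {E = 1, R(S,1) = 1}`, so that `PC = 1 - ℙ(R(S,0) = 1 ∣ C)` and
`ℙ(C) = ℙ(E = 1) ℙ(R = 1 ∣ E = 1)`. Stratifying by `S` and using that the response block is
independent of `(S, E)`, `ℙ(C, R(S,0) = 1) = ∑ s, ℙ(E = 1, S = s) ℙ(R(s,1) = 1, R(s,0) = 1)`.
The Fréchet bound `ℙ(R(s,1) = 1, R(s,0) = 1) ≥ ℙ(R(s,1) = 1) - ℙ(R(s,0) = 0)` then finishes the
proof, since by the same independence these two marginals are the observable
`ℙ(R = 1 ∣ E = 1, S = s)` and `ℙ(R = 0 ∣ E = 0, S = s)`.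
-/

open MeasureTheory ProbabilityTheory

section General

variable {Ω α β γ : Type*} [MeasurableSpace Ω] {μ : Measure Ω}

lemma Measurable.apply_index [MeasurableSpace α] [Countable α] [MeasurableSingletonClass α]
    [MeasurableSpace β] {X : Ω → α} {F : α → Ω → β} (hX : Measurable X)
    (hF : ∀ a, Measurable (F a)) : Measurable fun ω => F (X ω) ω :=
  (measurable_from_prod_countable_left (f := fun p : Ω × α => F p.2 p.1) hF).comp
    (measurable_id.prodMk hX)

lemma measure_inter_preimage_eq_mul_of_indep₃ [IsProbabilityMeasure μ]
    {X : Ω → α} {Y : Ω → β} {Z : Ω → γ}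
    (hXYZ : ∀ a b c, μ (X ⁻¹' a ∩ Y ⁻¹' b ∩ Z ⁻¹' c) =
      μ (X ⁻¹' a) * μ (Y ⁻¹' b) * μ (Z ⁻¹' c))
    (a : Set α) (b : Set β) (c : Set γ) :
    μ (X ⁻¹' a ∩ Y ⁻¹' b ∩ Z ⁻¹' c) = μ (X ⁻¹' a ∩ Y ⁻¹' b) * μ (Z ⁻¹' c) := by
  have hXY := hXYZ a b Set.univ
  rw [Set.preimage_univ, Set.inter_univ, measure_univ, mul_one] at hXY
  rw [hXYZ, hXY]

lemma cond_apply_eq_of_measure_inter_eq_mul [IsFiniteMeasure μ] {s t : Set Ω}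
    (hs : MeasurableSet s) (hμs : μ s ≠ 0) (hst : μ (s ∩ t) = μ s * μ t) :
    μ[t | s] = μ t := by
  rw [cond_apply hs, hst, ← mul_assoc, ENNReal.inv_mul_cancel hμs (measure_ne_top μ s), one_mul]

lemma cond_toReal_apply [IsFiniteMeasure μ] {s : Set Ω} (hs : MeasurableSet s) (t : Set Ω) :
    (μ[t | s]).toReal = μ.real (s ∩ t) / μ.real s := by
  rw [cond_apply hs, ENNReal.toReal_mul, ENNReal.toReal_inv, inv_mul_eq_div]
  rfl

lemma sum_measureReal_inter_preimage_singleton [IsFiniteMeasure μ] [Fintype α]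
    [MeasurableSpace α] [MeasurableSingletonClass α] {X : Ω → α} (hX : Measurable X)
    (t : Set Ω) : ∑ a, μ.real (t ∩ X ⁻¹' {a}) = μ.real t := by
  have hfib (a : α) : μ.real (t ∩ X ⁻¹' {a}) = (μ.restrict t).real (X ⁻¹' {a}) := by
    rw [measureReal_restrict_apply (hX (measurableSet_singleton a)), Set.inter_comm]
  simp_rw [hfib]
  rw [sum_measureReal_preimage_singleton _ fun a _ => hX (measurableSet_singleton a),
    Finset.coe_univ, Set.preimage_univ, measureReal_restrict_apply_univ]

end General

section SufficientCovariate

variable {Ω 𝒮 : Type*} [MeasurableSpace Ω] {μ : Measure Ω} [IsProbabilityMeasure μ]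
  {S : Ω → 𝒮} {Epot : 𝒮 → Ω → Bool} {Rpot : 𝒮 → Bool → Ω → Bool}

lemma measure_stratum_inter_response_eq_mul
    (hindep : ∀ (a : Set 𝒮) (b : Set (𝒮 → Bool)) (c : Set (𝒮 → Bool → Bool)),
      μ (S ⁻¹' a ∩ (fun ω s => Epot s ω) ⁻¹' b ∩ (fun ω s e => Rpot s e ω) ⁻¹' c) =
        μ (S ⁻¹' a) * μ ((fun ω s => Epot s ω) ⁻¹' b) *
          μ ((fun ω s e => Rpot s e ω) ⁻¹' c))
    (s : 𝒮) (e : Bool) (c : Set (𝒮 → Bool → Bool)) :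
    μ ({ω | Epot (S ω) ω = e ∧ S ω = s} ∩ (fun ω s e => Rpot s e ω) ⁻¹' c) =
      μ {ω | Epot (S ω) ω = e ∧ S ω = s} * μ ((fun ω s e => Rpot s e ω) ⁻¹' c) := by
  have hstratum : {ω | Epot (S ω) ω = e ∧ S ω = s} =
      S ⁻¹' {s} ∩ (fun ω s => Epot s ω) ⁻¹' {f | f s = e} := by
    ext ω
    constructor
    · rintro ⟨he, rfl⟩
      exact ⟨rfl, he⟩
    · rintro ⟨rfl, he⟩
      exact ⟨he, rfl⟩
  rw [hstratum]
  exact measure_inter_preimage_eq_mul_of_indep₃ hindep _ _ _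

lemma cond_stratum_observed_response
    (hindep : ∀ (a : Set 𝒮) (b : Set (𝒮 → Bool)) (c : Set (𝒮 → Bool → Bool)),
      μ (S ⁻¹' a ∩ (fun ω s => Epot s ω) ⁻¹' b ∩ (fun ω s e => Rpot s e ω) ⁻¹' c) =
        μ (S ⁻¹' a) * μ ((fun ω s => Epot s ω) ⁻¹' b) *
          μ ((fun ω s e => Rpot s e ω) ⁻¹' c))
    {s : 𝒮} {e : Bool} (hA : MeasurableSet {ω | Epot (S ω) ω = e ∧ S ω = s})
    (hμA : μ {ω | Epot (S ω) ω = e ∧ S ω = s} ≠ 0) (r : Bool) :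
    μ[{ω | Rpot (S ω) (Epot (S ω) ω) ω = r} | {ω | Epot (S ω) ω = e ∧ S ω = s}] =
      μ {ω | Rpot s e ω = r} := by
  have hobserved : {ω | Epot (S ω) ω = e ∧ S ω = s} ∩ {ω | Rpot (S ω) (Epot (S ω) ω) ω = r} =
      {ω | Epot (S ω) ω = e ∧ S ω = s} ∩ {ω | Rpot s e ω = r} := by
    ext ω
    refine and_congr_right fun ⟨he, hs⟩ => ?_
    change Rpot (S ω) (Epot (S ω) ω) ω = r ↔ Rpot s e ω = r
    rw [he, hs]
  rw [← cond_inter_self hA, hobserved, cond_inter_self hA]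
  exact cond_apply_eq_of_measure_inter_eq_mul hA hμA
    (measure_stratum_inter_response_eq_mul hindep s e {g | g s e = r})


lemma cond_mul_max_sub_le_measureReal_div [MeasurableSpace 𝒮] [Countable 𝒮] [MeasurableSingletonClass 𝒮]
    (hindep : ∀ (a : Set 𝒮) (b : Set (𝒮 → Bool)) (c : Set (𝒮 → Bool → Bool)),
      μ (S ⁻¹' a ∩ (fun ω s => Epot s ω) ⁻¹' b ∩ (fun ω s e => Rpot s e ω) ⁻¹' c) =
        μ (S ⁻¹' a) * μ ((fun ω s => Epot s ω) ⁻¹' b) *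
          μ ((fun ω s e => Rpot s e ω) ⁻¹' c))
    (hS : Measurable S) (hEpot : ∀ s, Measurable (Epot s)) {s : 𝒮}
    (hpos : ∀ e, μ {ω | Epot (S ω) ω = e ∧ S ω = s} ≠ 0) :
    (μ[{ω | S ω = s} | {ω | Epot (S ω) ω = true}]).toReal *
        max 0 ((μ[{ω | Rpot (S ω) (Epot (S ω) ω) ω = true} |
            {ω | Epot (S ω) ω = true ∧ S ω = s}]).toReal -
          (μ[{ω | Rpot (S ω) (Epot (S ω) ω) ω = false} |
            {ω | Epot (S ω) ω = false ∧ S ω = s}]).toReal) ≤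
      μ.real ({ω | Epot (S ω) ω = true ∧ S ω = s} ∩
          ({ω | Rpot s true ω = true} \ {ω | Rpot s false ω = false})) /
        μ.real {ω | Epot (S ω) ω = true} := by
  have hE (e : Bool) : MeasurableSet {ω | Epot (S ω) ω = e} :=
    hS.apply_index hEpot (measurableSet_singleton e)
  have hA (e : Bool) : MeasurableSet {ω | Epot (S ω) ω = e ∧ S ω = s} :=
    (hE e).inter (hS (measurableSet_singleton s))
  have hindep_both : μ.real ({ω | Epot (S ω) ω = true ∧ S ω = s} ∩
      ({ω | Rpot s true ω = true} \ {ω | Rpot s false ω = false})) =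
      μ.real {ω | Epot (S ω) ω = true ∧ S ω = s} *
        μ.real ({ω | Rpot s true ω = true} \ {ω | Rpot s false ω = false}) := by
    simp only [measureReal_def, ← ENNReal.toReal_mul]
    exact congrArg ENNReal.toReal (measure_stratum_inter_response_eq_mul hindep s true
      ({g | g s true = true} \ {g | g s false = false}))
  rw [cond_toReal_apply (hE true), ← Set.ofPred_and,
    cond_stratum_observed_response hindep (hA true) (hpos true),
    cond_stratum_observed_response hindep (hA false) (hpos false), hindep_both,
    mul_div_right_comm]
  gcongr
  exact max_le measureReal_nonneg le_measureReal_sdiff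

lemma measureReal_sdiff_eq_sum_stratum [Fintype 𝒮] [MeasurableSpace 𝒮] [MeasurableSingletonClass 𝒮]
    (hS : Measurable S) :
    μ.real ({ω | Epot (S ω) ω = true ∧ Rpot (S ω) true ω = true} \
        {ω | Rpot (S ω) false ω = false}) =
      ∑ s, μ.real ({ω | Epot (S ω) ω = true ∧ S ω = s} ∩
        ({ω | Rpot s true ω = true} \ {ω | Rpot s false ω = false})) := by
  rw [← sum_measureReal_inter_preimage_singleton hS]
  refine Finset.sum_congr rfl fun s _ => congrArg μ.real ?_
  ext ω
  constructor
  · rintro ⟨⟨⟨he, h1⟩, h0⟩, rfl⟩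
    exact ⟨⟨he, rfl⟩, h1, h0⟩
  · rintro ⟨⟨he, rfl⟩, h1, h0⟩
    exact ⟨⟨⟨he, h1⟩, h0⟩, rfl⟩

end SufficientCovariate

theorem sufficient_covariate_pc_upper_bound_general
    {Ω : Type*} [MeasurableSpace Ω] (μ : Measure Ω) [IsProbabilityMeasure μ]
    {𝒮 : Type*} [Fintype 𝒮] [MeasurableSpace 𝒮] [MeasurableSingletonClass 𝒮]
    (S : Ω → 𝒮) (Epot : 𝒮 → Ω → Bool) (Rpot : 𝒮 → Bool → Ω → Bool)
    (hSmeas : Measurable S) (hEpotmeas : ∀ s, Measurable (Epot s))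
    (hRpotmeas : ∀ s e, Measurable (Rpot s e))
    (hindep : ∀ (a : Set 𝒮) (b : Set (𝒮 → Bool)) (c : Set (𝒮 → Bool → Bool)),
      μ (S ⁻¹' a ∩ (fun ω s => Epot s ω) ⁻¹' b ∩ (fun ω s e => Rpot s e ω) ⁻¹' c) =
        μ (S ⁻¹' a) * μ ((fun ω s => Epot s ω) ⁻¹' b) *
          μ ((fun ω s e => Rpot s e ω) ⁻¹' c))
    (E R : Ω → Bool)
    (hE : E = fun ω => Epot (S ω) ω)
    (hRdef : R = fun ω => Rpot (S ω) (E ω) ω)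
    (hpos : ∀ (s : 𝒮) (e : Bool), 0 < μ {ω | E ω = e ∧ S ω = s})
    (p₁ : ℝ) (hp₁ : p₁ = (μ[|{ω | E ω = true}] {ω | R ω = true}).toReal)
    (Γ : ℝ)
    (hΓ : Γ = ∑ s : 𝒮, (μ[|{ω | E ω = true}] {ω | S ω = s}).toReal *
      max 0 ((μ[|{ω | E ω = true ∧ S ω = s}] {ω | R ω = true}).toReal -
        (μ[|{ω | E ω = false ∧ S ω = s}] {ω | R ω = false}).toReal))
    (PC : ℝ)
    (hPC : PC = (μ[|{ω | E ω = true ∧ Rpot (S ω) true ω = true}]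
      {ω | Rpot (S ω) false ω = false}).toReal) :
    PC ≤ 1 - Γ / p₁ := by
  subst hRdef hE
  beta_reduce at hpos hp₁ hΓ hPC
  set C := {ω | Epot (S ω) ω = true ∧ Rpot (S ω) true ω = true}
  set t := {ω | Rpot (S ω) false ω = false}
  set m := μ.real {ω | Epot (S ω) ω = true}
  have hE1 : MeasurableSet {ω | Epot (S ω) ω = true} :=
    hSmeas.apply_index hEpotmeas (measurableSet_singleton true)
  have hC : MeasurableSet C :=
    hE1.inter (hSmeas.apply_index (fun s => hRpotmeas s true) (measurableSet_singleton true))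
  have ht : MeasurableSet t :=
    hSmeas.apply_index (fun s => hRpotmeas s false) (measurableSet_singleton false)
  have hm : 0 < m := by
    obtain ⟨ω⟩ := nonempty_of_isProbabilityMeasure μ
    exact (ENNReal.toReal_pos (hpos (S ω) true).ne' (measure_ne_top μ _)).trans_le
      (measureReal_mono fun _ h => h.1)
  have hp₁C : p₁ = μ.real C / m := by
    rw [hp₁, cond_toReal_apply hE1]
    congr 2
    exact Set.ext fun ω => and_congr_right fun he => by rw [Set.mem_ofPred_eq, he]
  have hΓC : Γ ≤ μ.real (C \ t) / m := by
    rw [hΓ, measureReal_sdiff_eq_sum_stratum hSmeas, Finset.sum_div]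
    exact Finset.sum_le_sum fun s _ =>
      cond_mul_max_sub_le_measureReal_div hindep hSmeas hEpotmeas fun e => (hpos s e).ne'
  calc PC = μ.real (C ∩ t) / μ.real C := by rw [hPC, cond_toReal_apply hC]
    _ ≤ 1 - μ.real (C \ t) / μ.real C := by
      rw [le_sub_iff_add_le, ← add_div, measureReal_inter_add_sdiff ht]
      exact div_self_le_one _
    _ ≤ 1 - Γ / p₁ := by
      have hp₁_nonneg : 0 ≤ p₁ := hp₁ ▸ ENNReal.toReal_nonneg
      refine sub_le_sub_left ?_ 1
      calc Γ / p₁ ≤ μ.real (C \ t) / m / p₁ := by gcongr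
        _ = μ.real (C \ t) / μ.real C := by rw [hp₁C, div_div_div_cancel_right₀ hm.ne']

/-- **Upper bound on the probability of causation in the sufficient-covariate setup.**
In the sufficient-covariate setup (covariate `S` in a finite type `𝒮`, potential
exposures `Epot s`, potential responses `Rpot s e`, the three blocks mutually
independent, observed `E = Epot (S ·) ·` and `R = Rpot (S ·) (E ·) ·`), assume
`ℙ(E = e, S = s) > 0` for every `s` and `e`, and `ℙ(R=1 ∣ E=1) > 0`.  Then the
probability of causation `PC = ℙ(R(S,0) = 0 ∣ E = 1, R(S,1) = 1)` satisfies
`PC ≤ 1 - Γ / ℙ(R=1 ∣ E=1)`, where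
`Γ = ∑ s, ℙ(S=s ∣ E=1) · max 0 (ℙ(R=1 ∣ E=1, S=s) - ℙ(R=0 ∣ E=0, S=s))`. -/
theorem sufficient_covariate_pc_upper_bound
    {Ω : Type*} [MeasurableSpace Ω] (μ : Measure Ω) [IsProbabilityMeasure μ]
    {𝒮 : Type*} [Fintype 𝒮] [MeasurableSpace 𝒮] [MeasurableSingletonClass 𝒮]
    (S : Ω → 𝒮) (Epot : 𝒮 → Ω → Bool) (Rpot : 𝒮 → Bool → Ω → Bool)
    (hSmeas : Measurable S) (hEpotmeas : ∀ s, Measurable (Epot s))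
    (hRpotmeas : ∀ s e, Measurable (Rpot s e))
    (hindep : ∀ (a : Set 𝒮) (b : Set (𝒮 → Bool)) (c : Set (𝒮 → Bool → Bool)),
      μ (S ⁻¹' a ∩ (fun ω s => Epot s ω) ⁻¹' b ∩ (fun ω s e => Rpot s e ω) ⁻¹' c) =
        μ (S ⁻¹' a) * μ ((fun ω s => Epot s ω) ⁻¹' b) *
          μ ((fun ω s e => Rpot s e ω) ⁻¹' c))
    (E R : Ω → Bool)
    (hE : E = fun ω => Epot (S ω) ω)
    (hRdef : R = fun ω => Rpot (S ω) (E ω) ω)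
    (hpos : ∀ (s : 𝒮) (e : Bool), 0 < μ {ω | E ω = e ∧ S ω = s})
    (p₁ : ℝ) (hp₁ : p₁ = (μ[|{ω | E ω = true}] {ω | R ω = true}).toReal)
    (hp₁pos : 0 < p₁)
    (Γ : ℝ)
    (hΓ : Γ = ∑ s : 𝒮, (μ[|{ω | E ω = true}] {ω | S ω = s}).toReal *
      max 0 ((μ[|{ω | E ω = true ∧ S ω = s}] {ω | R ω = true}).toReal -
        (μ[|{ω | E ω = false ∧ S ω = s}] {ω | R ω = false}).toReal))
    (PC : ℝ)
    (hPC : PC = (μ[|{ω | E ω = true ∧ Rpot (S ω) true ω = true}]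
      {ω | Rpot (S ω) false ω = false}).toReal) :
    PC ≤ 1 - Γ / p₁ :=
  sufficient_covariate_pc_upper_bound_general μ S Epot Rpot hSmeas hEpotmeas hRpotmeas hindep E R hE
    hRdef hpos p₁ hp₁ Γ hΓ PC hPC
end

section
/- Ignoring a confounder can make the no-confounding upper bound on the probability of causation fail completely: in the sufficient-covariate setup with binary covariate S satisfying ℙ(S=1) = ℙ(S=0) = 1/2, ℙ(E=1 ∣ S=1) = 0.2, ℙ(E=1 ∣ S=0) = 0.8, ℙ(R=1 ∣ E=1, S=1) = 0.2, ℙ(R=1 ∣ E=0, S=1) = 0.8, ℙ(R=1 ∣ E=1, S=0) = 0.8, and ℙ(R=1 ∣ E=0, S=0) = 0.2, the probability of causation satisfies PC ≥ 12/17 ≈ 0.71, whereas the quantity min(1, ℙ(R=0 ∣ E=0)/ℙ(R=1 ∣ E=1)) computed from the marginal joint distribution of (E,R) equals 8/17 ≈ 0.47; in particular PC strictly exceeds the upper bound that the no-confounding formula would (incorrectly) assign. -/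
open MeasureTheory ProbabilityTheory

set_option maxHeartbeats 2000000 in
/-- **Ignoring a confounder can make the no-confounding upper bound fail completely.**
Sufficient-covariate setup with binary covariate `S` (values in `Bool`): potential
exposures `Epot s`, potential responses `Rpot s e`, the three blocks `S`, `(Epot s)_s`,
`(Rpot s e)_{s,e}` mutually independent, observed `E = Epot (S ·) ·` and
`R = Rpot (S ·) (E ·) ·`.  With `ℙ(S=1) = ℙ(S=0) = 1/2`, `ℙ(E=1 ∣ S=1) = 0.2`,
`ℙ(E=1 ∣ S=0) = 0.8`, `ℙ(R=1 ∣ E=1, S=1) = 0.2`, `ℙ(R=1 ∣ E=0, S=1) = 0.8`,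
`ℙ(R=1 ∣ E=1, S=0) = 0.8`, `ℙ(R=1 ∣ E=0, S=0) = 0.2`, the probability of causation
`PC = ℙ(R(S,0) = 0 ∣ E = 1, R(S,1) = 1)` satisfies `PC ≥ 12/17`, whereas the quantity
`min 1 (ℙ(R=0 ∣ E=0) / ℙ(R=1 ∣ E=1))` computed from the marginal joint distribution of
`(E, R)` equals `8/17`; in particular `PC` strictly exceeds the upper bound that the
no-confounding formula would (incorrectly) assign. -/
theorem biased_analysis_example
    {Ω : Type*} [MeasurableSpace Ω] (μ : Measure Ω) [IsProbabilityMeasure μ]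
    (S : Ω → Bool) (Epot : Bool → Ω → Bool) (Rpot : Bool → Bool → Ω → Bool)
    (hSmeas : Measurable S) (hEpotmeas : ∀ s, Measurable (Epot s))
    (hRpotmeas : ∀ s e, Measurable (Rpot s e))
    (hindep : ∀ (a : Set Bool) (b : Set (Bool → Bool)) (c : Set (Bool → Bool → Bool)),
      μ (S ⁻¹' a ∩ (fun ω s => Epot s ω) ⁻¹' b ∩ (fun ω s e => Rpot s e ω) ⁻¹' c) =
        μ (S ⁻¹' a) * μ ((fun ω s => Epot s ω) ⁻¹' b) *
          μ ((fun ω s e => Rpot s e ω) ⁻¹' c))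
    (E R : Ω → Bool)
    (hE : E = fun ω => Epot (S ω) ω)
    (hRdef : R = fun ω => Rpot (S ω) (E ω) ω)
    (hS1 : (μ {ω | S ω = true}).toReal = 1 / 2)
    (hS0 : (μ {ω | S ω = false}).toReal = 1 / 2)
    (hES1 : (μ[|{ω | S ω = true}] {ω | E ω = true}).toReal = 0.2)
    (hES0 : (μ[|{ω | S ω = false}] {ω | E ω = true}).toReal = 0.8)
    (hR11 : (μ[|{ω | E ω = true ∧ S ω = true}] {ω | R ω = true}).toReal = 0.2)
    (hR01 : (μ[|{ω | E ω = false ∧ S ω = true}] {ω | R ω = true}).toReal = 0.8)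
    (hR10 : (μ[|{ω | E ω = true ∧ S ω = false}] {ω | R ω = true}).toReal = 0.8)
    (hR00 : (μ[|{ω | E ω = false ∧ S ω = false}] {ω | R ω = true}).toReal = 0.2)
    (PC : ℝ)
    (hPC : PC = (μ[|{ω | E ω = true ∧ Rpot (S ω) true ω = true}]
      {ω | Rpot (S ω) false ω = false}).toReal)
    (p₁ q₀ : ℝ)
    (hp₁ : p₁ = (μ[|{ω | E ω = true}] {ω | R ω = true}).toReal)
    (hq₀ : q₀ = (μ[|{ω | E ω = false}] {ω | R ω = false}).toReal) :
    12 / 17 ≤ PC ∧ min 1 (q₀ / p₁) = 8 / 17 ∧ min 1 (q₀ / p₁) < PC := by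

  subst hRdef hE
  -- measurability of elementary events
  have mS : ∀ s : Bool, MeasurableSet {ω | S ω = s} := fun s => hSmeas (measurableSet_singleton s)
  have mE : ∀ s e : Bool, MeasurableSet {ω | Epot s ω = e} := fun s e =>
    hEpotmeas s (measurableSet_singleton e)
  have mR : ∀ s e r : Bool, MeasurableSet {ω | Rpot s e ω = r} := fun s e r =>
    hRpotmeas s e (measurableSet_singleton r)
  have mRR : ∀ s : Bool,
      MeasurableSet {ω | Rpot s true ω = true ∧ Rpot s false ω = false} := fun s =>
    (mR s true true).inter (mR s false false)
  -- real-valued factorization from independence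
  have fact : ∀ (s : Bool) (b : Set (Bool → Bool)) (c : Set (Bool → Bool → Bool)),
      (μ ({ω | S ω = s} ∩ (fun ω s => Epot s ω) ⁻¹' b ∩ (fun ω s e => Rpot s e ω) ⁻¹' c)).toReal =
      (μ {ω | S ω = s}).toReal * (μ ((fun ω s => Epot s ω) ⁻¹' b)).toReal *
        (μ ((fun ω s e => Rpot s e ω) ⁻¹' c)).toReal := by
    intro s b c
    have h := hindep {s} b c
    rw [show S ⁻¹' {s} = {ω | S ω = s} from rfl] at h
    rw [h, ENNReal.toReal_mul, ENNReal.toReal_mul]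
  have fE : ∀ s e : Bool, (μ ({ω | S ω = s} ∩ {ω | Epot s ω = e})).toReal =
      (μ {ω | S ω = s}).toReal * (μ {ω | Epot s ω = e}).toReal := by
    intro s e
    have h := fact s {f | f s = e} Set.univ
    simpa using h
  have fER : ∀ s e r : Bool,
      (μ ({ω | S ω = s} ∩ {ω | Epot s ω = e} ∩ {ω | Rpot s e ω = r})).toReal =
      (μ {ω | S ω = s}).toReal * (μ {ω | Epot s ω = e}).toReal *
        (μ {ω | Rpot s e ω = r}).toReal := by
    intro s e r
    exact fact s {f | f s = e} {g | g s e = r}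
  have fERR : ∀ s e : Bool,
      (μ ({ω | S ω = s} ∩ {ω | Epot s ω = e} ∩
        {ω | Rpot s true ω = true ∧ Rpot s false ω = false})).toReal =
      (μ {ω | S ω = s}).toReal * (μ {ω | Epot s ω = e}).toReal *
        (μ {ω | Rpot s true ω = true ∧ Rpot s false ω = false}).toReal := by
    intro s e
    exact fact s {f | f s = e} {g | g s true = true ∧ g s false = false}
  -- disjoint union helper
  have tun : ∀ {s t : Set Ω}, Disjoint s t → MeasurableSet t →
      (μ (s ∪ t)).toReal = (μ s).toReal + (μ t).toReal := by
    intro s t hd ht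
    rw [measure_union hd ht, ENNReal.toReal_add (measure_ne_top _ _) (measure_ne_top _ _)]
  -- complements
  have fEc : ∀ s : Bool,
      (μ {ω | Epot s ω = true}).toReal + (μ {ω | Epot s ω = false}).toReal = 1 := by
    intro s
    have hu : {ω | Epot s ω = true} ∪ {ω | Epot s ω = false} = Set.univ := by
      ext ω; cases h : Epot s ω <;> simp [h]
    have hd : Disjoint {ω | Epot s ω = true} {ω | Epot s ω = false} := by
      rw [Set.disjoint_left]; intro ω h1 h2; simp_all
    have := tun hd (mE s false)
    rw [hu] at this
    simp [measure_univ] at this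
    linarith
  have fRc : ∀ s e : Bool,
      (μ {ω | Rpot s e ω = true}).toReal + (μ {ω | Rpot s e ω = false}).toReal = 1 := by
    intro s e
    have hu : {ω | Rpot s e ω = true} ∪ {ω | Rpot s e ω = false} = Set.univ := by
      ext ω; cases h : Rpot s e ω <;> simp [h]
    have hd : Disjoint {ω | Rpot s e ω = true} {ω | Rpot s e ω = false} := by
      rw [Set.disjoint_left]; intro ω h1 h2; simp_all
    have := tun hd (mR s e false)
    rw [hu] at this
    simp [measure_univ] at this
    linarith

  -- set identities for substituting S inside events
  have hI1 : ∀ s e : Bool, {ω | S ω = s} ∩ {ω | Epot (S ω) ω = e} =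
      {ω | S ω = s} ∩ {ω | Epot s ω = e} := by
    intro s e; ext ω
    simp only [Set.mem_inter_iff, Set.mem_setOf_eq]
    constructor
    · rintro ⟨h1, h2⟩; rw [h1] at h2; exact ⟨h1, h2⟩
    · rintro ⟨h1, h2⟩; exact ⟨h1, by rw [h1]; exact h2⟩
  -- Epot marginals
  rw [ProbabilityTheory.cond_apply (mS true) μ, ENNReal.toReal_mul, ENNReal.toReal_inv,
    hI1 true true, fE true true, hS1] at hES1
  rw [ProbabilityTheory.cond_apply (mS false) μ, ENNReal.toReal_mul, ENNReal.toReal_inv,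
    hI1 false true, fE false true, hS0] at hES0
  norm_num at hES1 hES0
  have heTT : (μ {ω | Epot true ω = true}).toReal = 1/5 := by linarith
  have heFT : (μ {ω | Epot false ω = true}).toReal = 4/5 := by linarith
  have heTF : (μ {ω | Epot true ω = false}).toReal = 4/5 := by
    have := fEc true; linarith
  have heFF : (μ {ω | Epot false ω = false}).toReal = 1/5 := by
    have := fEc false; linarith

  -- conditioning sets of R hypotheses
  have hCs : ∀ s e : Bool, {ω | Epot (S ω) ω = e ∧ S ω = s} =
      {ω | S ω = s} ∩ {ω | Epot s ω = e} := by
    intro s e; ext ω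
    simp only [Set.mem_inter_iff, Set.mem_setOf_eq]
    constructor
    · rintro ⟨h1, h2⟩; rw [h2] at h1; exact ⟨h2, h1⟩
    · rintro ⟨h1, h2⟩; exact ⟨by rw [h1]; exact h2, h1⟩
  have hRt : ∀ s e : Bool, {ω | S ω = s} ∩ {ω | Epot s ω = e} ∩
      {ω | Rpot (S ω) (Epot (S ω) ω) ω = true} =
      {ω | S ω = s} ∩ {ω | Epot s ω = e} ∩ {ω | Rpot s e ω = true} := by
    intro s e; ext ω
    simp only [Set.mem_inter_iff, Set.mem_setOf_eq]
    constructor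
    · rintro ⟨⟨h1, h2⟩, h3⟩; rw [h1, h2] at h3; exact ⟨⟨h1, h2⟩, h3⟩
    · rintro ⟨⟨h1, h2⟩, h3⟩; exact ⟨⟨h1, h2⟩, by rw [h1, h2]; exact h3⟩
  rw [hCs true true, ProbabilityTheory.cond_apply ((mS true).inter (mE true true)) μ,
    ENNReal.toReal_mul, ENNReal.toReal_inv, hRt true true, fER true true true,
    fE true true, hS1, heTT] at hR11
  rw [hCs true false, ProbabilityTheory.cond_apply ((mS true).inter (mE true false)) μ,
    ENNReal.toReal_mul, ENNReal.toReal_inv, hRt true false, fER true false true,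
    fE true false, hS1, heTF] at hR01
  rw [hCs false true, ProbabilityTheory.cond_apply ((mS false).inter (mE false true)) μ,
    ENNReal.toReal_mul, ENNReal.toReal_inv, hRt false true, fER false true true,
    fE false true, hS0, heFT] at hR10
  rw [hCs false false, ProbabilityTheory.cond_apply ((mS false).inter (mE false false)) μ,
    ENNReal.toReal_mul, ENNReal.toReal_inv, hRt false false, fER false false true,
    fE false false, hS0, heFF] at hR00
  norm_num at hR11 hR01 hR10 hR00
  have hrTTT : (μ {ω | Rpot true true ω = true}).toReal = 1/5 := by linarith
  have hrTFT : (μ {ω | Rpot true false ω = true}).toReal = 4/5 := by linarith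
  have hrFTT : (μ {ω | Rpot false true ω = true}).toReal = 4/5 := by linarith
  have hrFFT : (μ {ω | Rpot false false ω = true}).toReal = 1/5 := by linarith
  have hrTFF : (μ {ω | Rpot true false ω = false}).toReal = 1/5 := by
    have := fRc true false; linarith
  have hrFFF : (μ {ω | Rpot false false ω = false}).toReal = 4/5 := by
    have := fRc false false; linarith

  -- disjointness helper
  have hdS : ∀ {X Y : Set Ω}, X ⊆ {ω | S ω = true} → Y ⊆ {ω | S ω = false} →
      Disjoint X Y := by
    intro X Y hX hY
    rw [Set.disjoint_left]
    intro ω h1 h2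
    have h3 := hX h1
    have h4 := hY h2
    simp only [Set.mem_setOf_eq] at h3 h4
    rw [h3] at h4
    exact Bool.noConfusion h4
  -- the event E = true and its measure
  have hU : {ω | Epot (S ω) ω = true} =
      ({ω | S ω = true} ∩ {ω | Epot true ω = true}) ∪
      ({ω | S ω = false} ∩ {ω | Epot false ω = true}) := by
    ext ω; cases hs : S ω <;> simp [hs]
  have hUf : {ω | Epot (S ω) ω = false} =
      ({ω | S ω = true} ∩ {ω | Epot true ω = false}) ∪
      ({ω | S ω = false} ∩ {ω | Epot false ω = false}) := by
    ext ω; cases hs : S ω <;> simp [hs]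
  -- p₁
  have hFset : (({ω | S ω = true} ∩ {ω | Epot true ω = true}) ∪
      ({ω | S ω = false} ∩ {ω | Epot false ω = true})) ∩
      {ω | Rpot (S ω) (Epot (S ω) ω) ω = true} =
      ({ω | S ω = true} ∩ {ω | Epot true ω = true} ∩ {ω | Rpot true true ω = true}) ∪
      ({ω | S ω = false} ∩ {ω | Epot false ω = true} ∩ {ω | Rpot false true ω = true}) := by
    ext ω
    cases hs : S ω <;> cases h1 : Epot true ω <;> cases h2 : Epot false ω <;>
      simp [hs, h1, h2]
  rw [hU, ProbabilityTheory.cond_apply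
      (((mS true).inter (mE true true)).union ((mS false).inter (mE false true))) μ,
    ENNReal.toReal_mul, ENNReal.toReal_inv, hFset,
    tun (hdS (fun ω h => h.1.1) (fun ω h => h.1.1))
      (((mS false).inter (mE false true)).inter (mR false true true)),
    fER true true true, fER false true true,
    tun (hdS (fun ω h => h.1) (fun ω h => h.1)) ((mS false).inter (mE false true)),
    fE true true, fE false true, hS1, hS0, heTT, heFT, hrTTT, hrFTT] at hp₁
  norm_num at hp₁
  -- q₀
  have hGset : (({ω | S ω = true} ∩ {ω | Epot true ω = false}) ∪
      ({ω | S ω = false} ∩ {ω | Epot false ω = false})) ∩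
      {ω | Rpot (S ω) (Epot (S ω) ω) ω = false} =
      ({ω | S ω = true} ∩ {ω | Epot true ω = false} ∩ {ω | Rpot true false ω = false}) ∪
      ({ω | S ω = false} ∩ {ω | Epot false ω = false} ∩ {ω | Rpot false false ω = false}) := by
    ext ω
    cases hs : S ω <;> cases h1 : Epot true ω <;> cases h2 : Epot false ω <;>
      simp [hs, h1, h2]
  have fERf : ∀ s e : Bool,
      (μ ({ω | S ω = s} ∩ {ω | Epot s ω = e} ∩ {ω | Rpot s e ω = false})).toReal =
      (μ {ω | S ω = s}).toReal * (μ {ω | Epot s ω = e}).toReal *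
        (μ {ω | Rpot s e ω = false}).toReal := fun s e => fER s e false
  rw [hUf, ProbabilityTheory.cond_apply
      (((mS true).inter (mE true false)).union ((mS false).inter (mE false false))) μ,
    ENNReal.toReal_mul, ENNReal.toReal_inv, hGset,
    tun (hdS (fun ω h => h.1.1) (fun ω h => h.1.1))
      (((mS false).inter (mE false false)).inter (mR false false false)),
    fERf true false, fERf false false,
    tun (hdS (fun ω h => h.1) (fun ω h => h.1)) ((mS false).inter (mE false false)),
    fE true false, fE false false, hS1, hS0, heTF, heFF, hrTFF, hrFFF] at hq₀
  norm_num at hq₀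
  -- PC
  have hHC : {ω | Epot (S ω) ω = true ∧ Rpot (S ω) true ω = true} =
      ({ω | S ω = true} ∩ {ω | Epot true ω = true} ∩ {ω | Rpot true true ω = true}) ∪
      ({ω | S ω = false} ∩ {ω | Epot false ω = true} ∩ {ω | Rpot false true ω = true}) := by
    ext ω; cases hs : S ω <;> simp [hs, and_assoc]
  have hNset : (({ω | S ω = true} ∩ {ω | Epot true ω = true} ∩ {ω | Rpot true true ω = true}) ∪
      ({ω | S ω = false} ∩ {ω | Epot false ω = true} ∩ {ω | Rpot false true ω = true})) ∩
      {ω | Rpot (S ω) false ω = false} =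
      ({ω | S ω = true} ∩ {ω | Epot true ω = true} ∩
        {ω | Rpot true true ω = true ∧ Rpot true false ω = false}) ∪
      ({ω | S ω = false} ∩ {ω | Epot false ω = true} ∩
        {ω | Rpot false true ω = true ∧ Rpot false false ω = false}) := by
    ext ω
    cases hs : S ω <;> simp [hs, and_assoc]
  rw [hHC, ProbabilityTheory.cond_apply
      ((((mS true).inter (mE true true)).inter (mR true true true)).union
        (((mS false).inter (mE false true)).inter (mR false true true))) μ,
    ENNReal.toReal_mul, ENNReal.toReal_inv, hNset,
    tun (hdS (fun ω h => h.1.1) (fun ω h => h.1.1))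
      (((mS false).inter (mE false true)).inter (mRR false)),
    fERR true true, fERR false true,
    tun (hdS (fun ω h => h.1.1) (fun ω h => h.1.1))
      (((mS false).inter (mE false true)).inter (mR false true true)),
    fER true true true, fER false true true,
    hS1, hS0, heTT, heFT, hrTTT, hrFTT] at hPC
  norm_num at hPC
  -- bound on μ(Rpot false true = true ∧ Rpot false false = false)
  set x₁ := (μ {ω | Rpot true true ω = true ∧ Rpot true false ω = false}).toReal with hx1def
  set x₀ := (μ {ω | Rpot false true ω = true ∧ Rpot false false ω = false}).toReal with hx0def
  have hx1nn : 0 ≤ x₁ := ENNReal.toReal_nonneg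
  have hx0nn : 0 ≤ x₀ := ENNReal.toReal_nonneg
  have hsub : {ω | Rpot false true ω = true} ⊆
      {ω | Rpot false true ω = true ∧ Rpot false false ω = false} ∪
      {ω | Rpot false false ω = true} := by
    intro ω h
    by_cases h2 : Rpot false false ω = true
    · exact Or.inr h2
    · exact Or.inl ⟨h, by simpa using h2⟩
  have hle : μ {ω | Rpot false true ω = true} ≤
      μ {ω | Rpot false true ω = true ∧ Rpot false false ω = false} +
      μ {ω | Rpot false false ω = true} :=
    (measure_mono hsub).trans (measure_union_le _ _)
  have hx0 : (3:ℝ)/5 ≤ x₀ := by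
    have h2 := ENNReal.toReal_mono
      (ENNReal.add_ne_top.mpr ⟨measure_ne_top _ _, measure_ne_top _ _⟩) hle
    rw [ENNReal.toReal_add (measure_ne_top _ _) (measure_ne_top _ _)] at h2
    rw [hrFTT, hrFFT] at h2
    rw [hx0def]
    linarith
  -- conclusion
  have hPCge : 12/17 ≤ PC := by rw [hPC]; linarith
  refine ⟨hPCge, ?_, ?_⟩
  · rw [hp₁, hq₀]
    rw [min_eq_right (by norm_num)]
    norm_num
  · rw [hp₁, hq₀, min_eq_right (by norm_num)]
    calc (8:ℝ)/25/(17/25) < 12/17 := by norm_num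
    _ ≤ PC := hPCge
end
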